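/- arXiv:2203.10891 — 4 statements merged into one kernel-verified Lean document; each statement's English description precedes it below -/
import Mathlib

section
/- Let (X,d) be a metric space with finite upper Minkowski dimension, i.e. there exists k ∈ ℕ such that for every n ∈ ℕ there is a finite subset S_n ⊆ X with |S_n| ≤ k^n and every point of X within distance 2^{-n} of S_n. Let F be a Gaussian free field on X, i.e. a random function F : X → ℝ such that F(x) is a measurable random variable for each x ∈ X and, for all x,y ∈ X, F(x) − F(y) is a centered Gaussian random variable with variance d(x,y). If F is almost surely continuous, then almost surely, for every γ ∈ (0, 1/2), F is Hölder continuous with exponent γ (i.e. there exists C > 0 with |F(x) − F(y)| ≤ C·d(x,y)^γ for all x,y ∈ X). -/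
/-!
A Chernoff bound shows that an increment `F x - F y` exceeds `n * √(d x y)` with probability at
most `2 * exp (-n ^ 2 / 2)`. The nets `Sₙ ∪ Sₙ₊₁` have `O(k ^ (2 * n))` pairs of points, so by
Borel–Cantelli, almost surely every increment between such a pair is at most `n * √(d x y)` once
`n` is large. On that event, chaining through the nets and passing to the limit by continuity
bounds the increments between points at distance `≤ 2⁻ᵐ` by `C * 2 ^ (-m * γ)`, because
`n * 2 ^ (-n / 2) = O(2 ^ (-n * γ))` for `γ < 1 / 2`. Large distances are handled by the
boundedness of `X`, which is covered by the finite net `S₀`.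
-/

open MeasureTheory ProbabilityTheory Set Real Filter Topology
open scoped ENNReal NNReal

lemma hasSubgaussianMGF_id_gaussianReal (v : ℝ≥0) :
    HasSubgaussianMGF id v (gaussianReal 0 v) where
  integrable_exp_mul := integrable_exp_mul_gaussianReal
  mgf_le t := by simp [mgf_id_gaussianReal]

lemma gaussianReal_measureReal_abs_ge_le (v : ℝ≥0) {ε : ℝ} (hε : 0 ≤ ε) :
    (gaussianReal 0 v).real {x | ε ≤ |x|} ≤ 2 * exp (-ε ^ 2 / (2 * v)) := by
  have h := hasSubgaussianMGF_id_gaussianReal v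
  calc (gaussianReal 0 v).real {x | ε ≤ |x|}
      ≤ (gaussianReal 0 v).real ({x | ε ≤ id x} ∪ {x | ε ≤ (-id) x}) :=
        measureReal_mono fun x (hx : ε ≤ |x|) => le_abs.1 hx
    _ ≤ _ := measureReal_union_le _ _
    _ ≤ 2 * exp (-ε ^ 2 / (2 * v)) := by linarith [h.measure_ge_le hε, h.neg.measure_ge_le hε]

lemma gaussianReal_abs_gt_mul_sqrt_le (v : ℝ≥0) {c : ℝ} (hc : 0 ≤ c) :
    gaussianReal 0 v {x | c * √v < |x|} ≤ ENNReal.ofReal (2 * exp (-c ^ 2 / 2)) := by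
  rcases eq_or_ne v 0 with rfl | hv
  · simp [gaussianReal_zero_var]
  have hv' : (0 : ℝ) < v := by positivity
  calc gaussianReal 0 v {x | c * √v < |x|} ≤ gaussianReal 0 v {x | c * √v ≤ |x|} :=
        measure_mono fun x (hx : c * √v < |x|) => hx.le
    _ = ENNReal.ofReal ((gaussianReal 0 v).real {x | c * √v ≤ |x|}) := (ofReal_measureReal).symm
    _ ≤ ENNReal.ofReal (2 * exp (-(c * √v) ^ 2 / (2 * v))) :=
        ENNReal.ofReal_le_ofReal (gaussianReal_measureReal_abs_ge_le v (by positivity))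
    _ = ENNReal.ofReal (2 * exp (-c ^ 2 / 2)) := by
        rw [mul_pow, sq_sqrt hv'.le]; field_simp

lemma measure_abs_gt_mul_sqrt_le {Ω : Type*} [MeasurableSpace Ω] {μ : Measure Ω} {Y : Ω → ℝ}
    {v : ℝ≥0} (hY : μ.map Y = gaussianReal 0 v) {c : ℝ} (hc : 0 ≤ c) :
    μ {ω | c * √v < |Y ω|} ≤ ENNReal.ofReal (2 * exp (-c ^ 2 / 2)) := by
  have hYm : AEMeasurable Y μ := aemeasurable_of_map_neZero (by rw [hY]; infer_instance)
  have hs : MeasurableSet {x : ℝ | c * √v < |x|} := measurableSet_lt measurable_const measurable_abs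
  change μ (Y ⁻¹' {x | c * √v < |x|}) ≤ _
  rw [← Measure.map_apply_of_aemeasurable hYm hs, hY]
  exact gaussianReal_abs_gt_mul_sqrt_le v hc

lemma summable_pow_mul_exp_neg_sq_div_two (c : ℝ) :
    Summable fun n : ℕ => c ^ n * exp (-(n : ℝ) ^ 2 / 2) := by
  have hlim : Tendsto (fun n : ℕ => |c| * exp (-(n : ℝ) / 2)) atTop (𝓝 0) := by
    have h := tendsto_neg_atTop_atBot.comp
      (Tendsto.atTop_div_const (r := (2 : ℝ)) two_pos (tendsto_natCast_atTop_atTop (R := ℝ)))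
    simpa [Function.comp_def, neg_div] using (tendsto_exp_atBot.comp h).const_mul |c|
  refine summable_geometric_two.of_norm_bounded_eventually_nat ?_
  filter_upwards [hlim.eventually_le_const (by norm_num : (0 : ℝ) < 1 / 2)] with n hn
  have hsplit : c ^ n * exp (-(n : ℝ) ^ 2 / 2) = (c * exp (-(n : ℝ) / 2)) ^ n := by
    rw [mul_pow, ← exp_nat_mul]; ring_nf
  rw [hsplit, norm_pow, norm_mul, norm_of_nonneg (exp_pos _).le]
  exact pow_le_pow_left₀ (by positivity) hn n

lemma ae_eventually_abs_sub_le_mul_sqrt_dist {X Ω : Type*} [PseudoMetricSpace X]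
    [MeasurableSpace Ω] {μ : Measure Ω} {F : Ω → X → ℝ}
    (hgauss : ∀ x y, μ.map (fun ω => F ω x - F ω y) = gaussianReal 0 (nndist x y))
    {T : ℕ → Finset X} {C c : ℝ} (hT : ∀ n, ((T n).card : ℝ) ≤ C * c ^ n) :
    ∀ᵐ ω ∂μ, ∀ᶠ n : ℕ in atTop, ∀ s ∈ T n, ∀ t ∈ T n, |F ω s - F ω t| ≤ n * √(dist s t) := by
  set E : ℕ → Set Ω := fun n =>
    ⋃ s ∈ T n, ⋃ t ∈ T n, {ω | n * √(dist s t) < |F ω s - F ω t|}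
  set b : ℕ → ℝ := fun n => 2 * C ^ 2 * ((c ^ 2) ^ n * exp (-(n : ℝ) ^ 2 / 2))
  have hb : Summable b := (summable_pow_mul_exp_neg_sq_div_two _).mul_left _
  have hEb : ∀ n, μ (E n) ≤ ENNReal.ofReal (b n) := by
    intro n
    have hpair : ∀ s t : X, μ {ω | n * √(dist s t) < |F ω s - F ω t|}
        ≤ ENNReal.ofReal (2 * exp (-(n : ℝ) ^ 2 / 2)) := fun s t => by
      simpa [coe_nndist] using measure_abs_gt_mul_sqrt_le (hgauss s t) n.cast_nonneg
    have hcard : ((T n).card : ℝ) ^ 2 ≤ C ^ 2 * (c ^ 2) ^ n := by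
      rw [← pow_mul, mul_comm 2 n, pow_mul, ← mul_pow]
      exact pow_le_pow_left₀ (by positivity) (hT n) 2
    calc μ (E n) ≤ ∑ s ∈ T n, ∑ t ∈ T n, ENNReal.ofReal (2 * exp (-(n : ℝ) ^ 2 / 2)) :=
          (measure_biUnion_finset_le _ _).trans <| Finset.sum_le_sum fun s _ =>
            (measure_biUnion_finset_le _ _).trans <| Finset.sum_le_sum fun t _ => hpair s t
      _ = ENNReal.ofReal (((T n).card : ℝ) ^ 2 * (2 * exp (-(n : ℝ) ^ 2 / 2))) := by
          simp only [Finset.sum_const, nsmul_eq_mul]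
          rw [ENNReal.ofReal_mul (sq_nonneg _), ENNReal.ofReal_pow (Nat.cast_nonneg _),
            ENNReal.ofReal_natCast, ENNReal.ofReal_mul zero_le_two]
          ring
      _ ≤ ENNReal.ofReal (b n) := ENNReal.ofReal_le_ofReal <| by
          nlinarith [exp_pos (-(n : ℝ) ^ 2 / 2)]
  have hsum : ∑' n, μ (E n) ≠ ∞ :=
    ne_top_of_le_ne_top (by simp [← ENNReal.ofReal_tsum_of_nonneg (fun n => by positivity) hb])
      (ENNReal.tsum_le_tsum hEb)
  filter_upwards [ae_eventually_notMem hsum] with ω hω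
  filter_upwards [hω] with n hn s hs t ht
  by_contra hlt
  exact hn (mem_biUnion hs (mem_biUnion ht (not_le.1 hlt)))

lemma exists_nat_mul_sqrt_le {γ : ℝ} (hγ : γ < 1 / 2) :
    ∃ A : ℝ, ∀ n : ℕ, n * √((2 : ℝ)⁻¹ ^ n) ≤ A * ((2 : ℝ)⁻¹ ^ γ) ^ n := by
  set q : ℝ := (2 : ℝ)⁻¹ ^ (1 / 2 - γ)
  have hq1 : q < 1 := rpow_lt_one (by norm_num) (by norm_num) (by linarith)
  obtain ⟨A, hA⟩ := (tendsto_self_mul_const_pow_of_lt_one (by positivity) hq1).bddAbove_range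
  refine ⟨A, fun n => ?_⟩
  have hsqrt : √((2 : ℝ)⁻¹ ^ n) = q ^ n * ((2 : ℝ)⁻¹ ^ γ) ^ n := by
    rw [← mul_pow, ← rpow_add (by norm_num), sub_add_cancel, rpow_pow_comm (by norm_num),
      sqrt_eq_rpow]
  rw [hsqrt, ← mul_assoc]
  exact mul_le_mul_of_nonneg_right (hA ⟨n, rfl⟩) (by positivity)

lemma boundedSpace_of_finset_net {X : Type*} [PseudoMetricSpace X] {S : Finset X} {r : ℝ}
    (hS : ∀ x, ∃ s ∈ S, dist x s ≤ r) : BoundedSpace X :=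
  ⟨(S.finite_toSet.isBounded.cthickening (δ := r)).subset fun x _ =>
    let ⟨s, hs, hxs⟩ := hS x; Metric.mem_cthickening_of_dist_le x s r S hs hxs⟩

section Chaining

variable {X Y : Type*} [PseudoMetricSpace Y] {f : X → Y}

lemma dist_le_of_dyadic_approx [PseudoMetricSpace X] (hf : Continuous f) {g : ℕ → X → X}
    (hg : ∀ n x, dist x (g n x) ≤ (2 : ℝ)⁻¹ ^ n) {ρ A : ℝ} (hρ : ρ < 1) {N : ℕ}
    (hstep : ∀ n ≥ N, ∀ x, dist (f (g n x)) (f (g (n + 1) x)) ≤ A * ρ ^ n)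
    {m : ℕ} (hm : N ≤ m) (x : X) :
    dist (f (g m x)) (f x) ≤ A * ρ ^ m / (1 - ρ) := by
  have hgx : Tendsto (fun n => g n x) atTop (𝓝 x) :=
    tendsto_iff_dist_tendsto_zero.2 <| squeeze_zero (fun _ => dist_nonneg)
      (fun n => (dist_comm _ _).trans_le (hg n x))
      (tendsto_pow_atTop_nhds_zero_of_lt_one (by norm_num) (by norm_num))
  have hshift : ∀ k, dist (f (g (k + m) x)) (f (g (k + 1 + m) x)) ≤ A * ρ ^ m * ρ ^ k := by
    intro k
    rw [mul_assoc, ← pow_add, add_comm m, Nat.add_right_comm]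
    exact hstep (k + m) (by omega) x
  simpa using dist_le_of_le_geometric_of_tendsto₀ ρ (A * ρ ^ m) hρ hshift
    ((hf.tendsto x).comp (hgx.comp (tendsto_add_atTop_nat m)))

lemma exists_holder_of_dyadic_bound [MetricSpace X] {γ B M : ℝ} (hγ : 0 < γ) {N : ℕ}
    (hsmall : ∀ m ≥ N, ∀ x y, dist x y ≤ (2 : ℝ)⁻¹ ^ m →
      dist (f x) (f y) ≤ B * ((2 : ℝ)⁻¹ ^ γ) ^ m)
    (hbdd : ∀ x y, dist (f x) (f y) ≤ M) :
    ∃ C > 0, ∀ x y, dist (f x) (f y) ≤ C * dist x y ^ γ := by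
  set ρ : ℝ := (2 : ℝ)⁻¹ ^ γ
  have hρ : 0 < ρ := by positivity
  have hρ_le : ∀ n : ℕ, ∀ d, (2 : ℝ)⁻¹ ^ n ≤ d → ρ ^ n ≤ d ^ γ := fun n d hd => by
    rw [rpow_pow_comm (by norm_num)]
    exact rpow_le_rpow (by positivity) hd hγ.le
  refine ⟨|B| / ρ + |M| / ρ ^ N + 1, by positivity, fun x y => ?_⟩
  rcases eq_or_ne x y with rfl | hxy
  · simp only [dist_self]; positivity
  have hd : 0 < dist x y := dist_pos.2 hxy
  rcases le_or_gt (dist x y) ((2 : ℝ)⁻¹ ^ N) with hnear | hfar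
  · obtain ⟨m, hm_lt, hm_le⟩ := exists_nat_pow_near_of_lt_one (y := (2 : ℝ)⁻¹) hd
      (hnear.trans (pow_le_one₀ (by norm_num) (by norm_num))) (by norm_num) (by norm_num)
    have hNm : N ≤ m := by
      have := hm_lt.trans_le hnear
      rw [pow_lt_pow_iff_right_of_lt_one₀ (by norm_num) (by norm_num)] at this
      omega
    calc dist (f x) (f y) ≤ |B| / ρ * ρ ^ (m + 1) := by
          rw [pow_succ, mul_comm _ ρ, ← mul_assoc, div_mul_cancel₀ _ hρ.ne']
          exact (hsmall m hNm x y hm_le).trans (by gcongr; exact le_abs_self B)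
      _ ≤ |B| / ρ * dist x y ^ γ := by gcongr; exact hρ_le _ _ hm_lt.le
      _ ≤ _ := by gcongr; linarith [show 0 ≤ |M| / ρ ^ N by positivity]
  · calc dist (f x) (f y) ≤ |M| / ρ ^ N * ρ ^ N := by
          rw [div_mul_cancel₀ _ (by positivity)]; exact (hbdd x y).trans (le_abs_self M)
      _ ≤ |M| / ρ ^ N * dist x y ^ γ := by gcongr; exact hρ_le _ _ hfar.le
      _ ≤ _ := by gcongr; linarith [show 0 ≤ |B| / ρ by positivity]

lemma dist_le_of_net_increments [PseudoMetricSpace X] [DecidableEq X] (hf : Continuous f)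
    {S : ℕ → Finset X} {g : ℕ → X → X} (hgS : ∀ n x, g n x ∈ S n)
    (hg : ∀ n x, dist x (g n x) ≤ (2 : ℝ)⁻¹ ^ n) {ρ A : ℝ} (hρ : ρ < 1) {N : ℕ}
    (hnet : ∀ n ≥ N, ∀ s ∈ S n ∪ S (n + 1), ∀ t ∈ S n ∪ S (n + 1),
      dist s t ≤ 3 * (2 : ℝ)⁻¹ ^ n → dist (f s) (f t) ≤ A * ρ ^ n)
    {m : ℕ} (hm : N ≤ m) (x y : X) :
    dist (f x) (f y) ≤ 2 * (A * ρ ^ m / (1 - ρ)) + dist (f (g m x)) (f (g m y)) := by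
  have hstep : ∀ n ≥ N, ∀ x, dist (f (g n x)) (f (g (n + 1) x)) ≤ A * ρ ^ n := by
    intro n hn x
    refine hnet n hn _ (Finset.mem_union_left _ (hgS n x)) _
      (Finset.mem_union_right _ (hgS (n + 1) x)) ?_
    have : (2 : ℝ)⁻¹ ^ (n + 1) ≤ (2 : ℝ)⁻¹ ^ n :=
      pow_le_pow_of_le_one (by norm_num) (by norm_num) n.le_succ
    have : (0 : ℝ) ≤ (2 : ℝ)⁻¹ ^ n := by positivity
    linarith [dist_triangle_left (g n x) (g (n + 1) x) x, hg n x, hg (n + 1) x]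
  linarith [dist_triangle4 (f x) (f (g m x)) (f (g m y)) (f y), dist_comm (f x) (f (g m x)),
    dist_comm (f y) (f (g m y)), dist_le_of_dyadic_approx hf hg hρ hstep hm x,
    dist_le_of_dyadic_approx hf hg hρ hstep hm y]

theorem exists_holder_of_net_increments [MetricSpace X] [BoundedSpace X] [DecidableEq X]
    (hf : Continuous f)
    {S : ℕ → Finset X} (hS : ∀ n x, ∃ s ∈ S n, dist x s ≤ (2 : ℝ)⁻¹ ^ n) {N : ℕ}
    (hnet : ∀ n ≥ N, ∀ s ∈ S n ∪ S (n + 1), ∀ t ∈ S n ∪ S (n + 1),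
      dist (f s) (f t) ≤ n * √(dist s t))
    {γ : ℝ} (hγ : γ ∈ Ioo 0 (1 / 2)) :
    ∃ C > 0, ∀ x y, dist (f x) (f y) ≤ C * dist x y ^ γ := by
  choose g hgS hg using hS
  set ρ : ℝ := (2 : ℝ)⁻¹ ^ γ
  have hρ : ρ < 1 := rpow_lt_one (by norm_num) (by norm_num) hγ.1
  obtain ⟨A, hA⟩ := exists_nat_mul_sqrt_le hγ.2
  have hnet' : ∀ n ≥ N, ∀ s ∈ S n ∪ S (n + 1), ∀ t ∈ S n ∪ S (n + 1),
      dist s t ≤ 3 * (2 : ℝ)⁻¹ ^ n → dist (f s) (f t) ≤ √3 * A * ρ ^ n := by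
    intro n hn s hs t ht hst
    calc dist (f s) (f t) ≤ n * √(3 * (2 : ℝ)⁻¹ ^ n) := (hnet n hn s hs t ht).trans (by gcongr)
      _ = √3 * (n * √((2 : ℝ)⁻¹ ^ n)) := by rw [sqrt_mul (by norm_num)]; ring
      _ ≤ √3 * A * ρ ^ n := by
        rw [mul_assoc]; exact mul_le_mul_of_nonneg_left (hA n) (by positivity)
  have hsplit : ∀ m ≥ N, ∀ x y, dist (f x) (f y)
      ≤ 2 * (√3 * A * ρ ^ m / (1 - ρ)) + dist (f (g m x)) (f (g m y)) :=
    fun m hm => dist_le_of_net_increments hf hgS hg hρ hnet' hm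
  have hgg : ∀ n x y, dist (g n x) (g n y) ≤ dist x y + 2 * (2 : ℝ)⁻¹ ^ n := fun n x y => by
    linarith [dist_triangle4 (g n x) x y (g n y), dist_comm (g n x) x, hg n x, hg n y]
  refine exists_holder_of_dyadic_bound hγ.1 (N := N) (B := √3 * A * (2 / (1 - ρ) + 1))
    (M := 2 * (√3 * A * ρ ^ N / (1 - ρ)) + N * √(Metric.diam (univ : Set X) + 2))
    (fun m hm x y hxy => ?_) (fun x y => ?_)
  · have hmid := hnet' m hm _ (Finset.mem_union_left _ (hgS m x)) _
      (Finset.mem_union_left _ (hgS m y)) (by linarith [hgg m x y])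
    calc dist (f x) (f y) ≤ 2 * (√3 * A * ρ ^ m / (1 - ρ)) + √3 * A * ρ ^ m :=
          (hsplit m hm x y).trans (by gcongr)
      _ = √3 * A * (2 / (1 - ρ) + 1) * ρ ^ m := by ring
  · have hdiam : dist (g N x) (g N y) ≤ Metric.diam (univ : Set X) + 2 := by
      linarith [hgg N x y, pow_le_one₀ (n := N) (by norm_num : (0 : ℝ) ≤ 2⁻¹) (by norm_num),
        Metric.dist_le_diam_of_mem (Bornology.isBounded_univ.2 ‹_›) (mem_univ x) (mem_univ y)]
    exact (hsplit N le_rfl x y).trans <| by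
      gcongr
      exact (hnet N le_rfl _ (Finset.mem_union_left _ (hgS N x)) _
        (Finset.mem_union_left _ (hgS N y))).trans (by gcongr)

end Chaining

theorem gaussian_free_field_holder_general
    (X : Type*) [MetricSpace X] (k : ℕ)
    (hdim : ∀ n : ℕ, ∃ S : Finset X, S.card ≤ k ^ n ∧
      ∀ x : X, ∃ s ∈ S, dist x s ≤ (2 : ℝ)⁻¹ ^ n)
    (Ω : Type*) [MeasurableSpace Ω] (μ : Measure Ω)
    (F : Ω → X → ℝ)
    (hgauss : ∀ x y : X,
      Measure.map (fun ω => F ω x - F ω y) μ = gaussianReal 0 (nndist x y))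
    (hcont : ∀ᵐ ω ∂μ, Continuous (F ω)) :
    ∀ᵐ ω ∂μ, ∀ γ ∈ Ioo (0 : ℝ) (1 / 2), ∃ C : ℝ, 0 < C ∧
      ∀ x y : X, |F ω x - F ω y| ≤ C * dist x y ^ γ := by
  classical
  choose S hcard hS using hdim
  have : BoundedSpace X := boundedSpace_of_finset_net (hS 0)
  have hnet_card : ∀ n, ((S n ∪ S (n + 1)).card : ℝ) ≤ (1 + k) * (k : ℝ) ^ n := fun n => by
    have := (Finset.card_union_le _ _).trans (add_le_add (hcard n) (hcard (n + 1)))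
    exact_mod_cast this.trans_eq (by ring)
  filter_upwards [ae_eventually_abs_sub_le_mul_sqrt_dist hgauss hnet_card, hcont] with ω hnet hFω
  obtain ⟨N, hN⟩ := eventually_atTop.1 hnet
  intro γ hγ
  simpa only [Real.dist_eq] using exists_holder_of_net_increments hFω hS (N := N)
    (fun n hn s hs t ht => by simpa only [Real.dist_eq] using hN n hn s hs t ht) hγ

/-- Hölder continuity of a Gaussian free field.  Let `(X,d)` be a metric space of
finite upper Minkowski dimension (witnessed by `k` and the covering condition), and
let `F` be a Gaussian free field on `X`: each `F · x` is measurable and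
`F · x − F · y` is a centered Gaussian with variance `d(x,y)`.  If `F` is almost
surely continuous, then almost surely `F` is Hölder continuous with every exponent
`γ ∈ (0, 1/2)`. -/
theorem gaussian_free_field_holder
    (X : Type*) [MetricSpace X] (k : ℕ)
    (hdim : ∀ n : ℕ, ∃ S : Finset X, S.card ≤ k ^ n ∧
      ∀ x : X, ∃ s ∈ S, dist x s ≤ (2 : ℝ)⁻¹ ^ n)
    (Ω : Type*) [MeasurableSpace Ω] (μ : Measure Ω) [IsProbabilityMeasure μ]
    (F : Ω → X → ℝ)
    (hmeas : ∀ x : X, Measurable fun ω => F ω x)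
    (hgauss : ∀ x y : X,
      Measure.map (fun ω => F ω x - F ω y) μ = gaussianReal 0 (nndist x y))
    (hcont : ∀ᵐ ω ∂μ, Continuous (F ω)) :
    ∀ᵐ ω ∂μ, ∀ γ ∈ Ioo (0 : ℝ) (1 / 2), ∃ C : ℝ, 0 < C ∧
      ∀ x y : X, |F ω x - F ω y| ≤ C * dist x y ^ γ :=
  gaussian_free_field_holder_general X k hdim Ω μ F hgauss hcont
end

section
/- Let (T,d,ρ,u) be a plane ℝ-tree. Then on T×[0,1], the relation → ('in front of') is a partial order (reflexive, antisymmetric, transitive), and the relation ↷ ('at the left of') is a strict partial order (irreflexive and transitive). -/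
open Set MeasureTheory Filter Metric

/-- The metric segment `[[x,y]]` between `x` and `y`. -/
def geoSeg {T : Type*} [MetricSpace T] (x y : T) : Set T :=
  {z | dist x z + dist z y = dist x y}

/-- `(T,d)` is an `ℝ`-tree: it is geodesic (any two points are joined by a geodesic
segment, which is `geoSeg x y`) and loopless (this segment is the unique arc joining
`x` and `y`). -/
structure IsRTree (T : Type*) [MetricSpace T] : Prop where
  geodesic : ∀ x y : T, ∃ γ : ℝ → T, γ 0 = x ∧ γ (dist x y) = y ∧
    (∀ s ∈ Icc (0:ℝ) (dist x y), ∀ t ∈ Icc (0:ℝ) (dist x y),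
      dist (γ s) (γ t) = |s - t|) ∧
    γ '' Icc (0:ℝ) (dist x y) = geoSeg x y
  loopless : ∀ x y : T, ∀ f : ℝ → T, ContinuousOn f (Icc (0:ℝ) 1) →
    InjOn f (Icc (0:ℝ) 1) → f 0 = x → f 1 = y → f '' Icc (0:ℝ) 1 = geoSeg x y

/-- The set of connected components of `T \ {x}`. -/
def comps {T : Type*} [MetricSpace T] (x : T) : Set (Set T) :=
  {C | ∃ y, y ≠ x ∧ C = connectedComponentIn ({x}ᶜ) y}

/-- A plane `ℝ`-tree structure on the metric space `T`: `T` is a separable complete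
`ℝ`-tree with a root and a balanced angle function `u`.  `cca x y` is the closest
common ancestor of `x` and `y`. -/
structure PlaneRTree (T : Type*) [MetricSpace T] where
  sep : TopologicalSpace.SeparableSpace T
  cpl : CompleteSpace T
  tree : IsRTree T
  root : T
  cca : T → T → T
  cca_mem : ∀ x y : T, cca x y ∈ geoSeg root x ∩ geoSeg root y
  cca_max : ∀ x y : T, ∀ z ∈ geoSeg root x ∩ geoSeg root y,
    dist root z ≤ dist root (cca x y)
  u : T → T → ℝ
  u_mem : ∀ x y : T, u x y ∈ Icc (0:ℝ) 1
  u_root : ∀ x : T, u x root = 0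
  u_self : ∀ x : T, u x x = 0
  u_eq_iff : ∀ x y z : T, y ≠ x → z ≠ x →
    (u x y = u x z ↔ connectedComponentIn ({x}ᶜ) y = connectedComponentIn ({x}ᶜ) z)
  balanced : ∀ x y : T, (comps x).ncard = 2 → u x y = 0 ∨ u x y = 1/2

namespace PlaneRTree

variable {T : Type*} [MetricSpace T]

open Classical in
/-- The angle `u(x, (y,w))`: it is `u x y` if `x ≠ y`, and `w` if `x = y`. -/
noncomputable def ang (P : PlaneRTree T) (x : T) (β : T × ℝ) : ℝ :=
  if x = β.1 then β.2 else P.u x β.1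

/-- `α ↷ β` : `α` is at the left of `β`. -/
def leftOf (P : PlaneRTree T) (α β : T × ℝ) : Prop :=
  P.ang (P.cca α.1 β.1) α < P.ang (P.cca α.1 β.1) β

/-- `α → β` : `β` is in front of `α`. -/
def frontOf (P : PlaneRTree T) (α β : T × ℝ) : Prop :=
  α.1 ∈ geoSeg P.root β.1 ∧ P.ang α.1 β = α.2

/-- The contour relation `≺` : `α ≺ β` iff `α ↷ β` or `α → β`. -/
def precOf (P : PlaneRTree T) (α β : T × ℝ) : Prop :=
  P.leftOf α β ∨ P.frontOf α β

end PlaneRTree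

section Helpers

variable {T : Type*} [MetricSpace T]

lemma mem_geoSeg_left (x y : T) : x ∈ geoSeg x y := by simp [geoSeg]

lemma mem_geoSeg_right (x y : T) : y ∈ geoSeg x y := by simp [geoSeg]

lemma dist_le_of_mem_geoSeg {ρ p q : T} (h : p ∈ geoSeg ρ q) : dist ρ p ≤ dist ρ q := by
  simp only [geoSeg, Set.mem_setOf_eq] at h
  have := dist_nonneg (x := p) (y := q)
  linarith

lemma geoSeg_antisymm {ρ x y : T} (h1 : x ∈ geoSeg ρ y) (h2 : y ∈ geoSeg ρ x) : x = y := by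
  simp only [geoSeg, Set.mem_setOf_eq] at h1 h2
  have hc := dist_comm x y
  have : dist x y = 0 := by linarith
  exact dist_eq_zero.mp this

/-- If `p ∈ [[ρ,y]]` and `q ∈ [[ρ,p]]` then `q ∈ [[ρ,y]]` and `p ∈ [[q,y]]`. -/
lemma geoSeg_chain {ρ p q y : T} (hp : p ∈ geoSeg ρ y) (hq : q ∈ geoSeg ρ p) :
    q ∈ geoSeg ρ y ∧ p ∈ geoSeg q y := by
  simp only [geoSeg, Set.mem_setOf_eq] at hp hq ⊢
  have t1 : dist q y ≤ dist q p + dist p y := dist_triangle _ _ _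
  have t2 : dist ρ y ≤ dist ρ q + dist q y := dist_triangle _ _ _
  constructor <;> linarith

/-- If `b ∈ [[ρ,y]]` and `a ∈ [[b,y]]` then `b ∈ [[ρ,a]]` and `a ∈ [[ρ,y]]`. -/
lemma geoSeg_chain' {ρ b a y : T} (hb : b ∈ geoSeg ρ y) (ha : a ∈ geoSeg b y) :
    b ∈ geoSeg ρ a ∧ a ∈ geoSeg ρ y := by
  simp only [geoSeg, Set.mem_setOf_eq] at hb ha ⊢
  have t1 : dist ρ a ≤ dist ρ b + dist b a := dist_triangle _ _ _
  have t2 : dist ρ y ≤ dist ρ a + dist a y := dist_triangle _ _ _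
  constructor <;> linarith

lemma notMem_geoSeg_of_lt {ρ a b y : T} (hb : b ∈ geoSeg ρ y)
    (h : dist ρ a < dist ρ b) : a ∉ geoSeg b y := fun ha => by
  have h1 := (geoSeg_chain' hb ha).1
  have := dist_le_of_mem_geoSeg h1
  linarith

lemma ne_of_lt_mem_geoSeg {ρ a p y : T} (hpy : p ∈ geoSeg ρ y)
    (h : dist ρ a < dist ρ p) : y ≠ a := by
  rintro rfl
  have := dist_le_of_mem_geoSeg hpy
  linarith

lemma geoSeg_dist_unique (tree : IsRTree T) {x y p q : T} (hp : p ∈ geoSeg x y)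
    (hq : q ∈ geoSeg x y) (hd : dist x p = dist x q) : p = q := by
  obtain ⟨γ, h0, -, hiso, him⟩ := tree.geodesic x y
  rw [← him] at hp hq
  obtain ⟨s, hs, rfl⟩ := hp
  obtain ⟨t, ht, rfl⟩ := hq
  have h0m : (0:ℝ) ∈ Icc (0:ℝ) (dist x y) := ⟨le_refl _, dist_nonneg⟩
  have hs' : dist x (γ s) = s := by
    rw [← h0, hiso 0 h0m s hs, zero_sub, abs_neg, abs_of_nonneg hs.1]
  have ht' : dist x (γ t) = t := by
    rw [← h0, hiso 0 h0m t ht, zero_sub, abs_neg, abs_of_nonneg ht.1]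
  have : s = t := by rw [← hs', ← ht', hd]
  rw [this]

lemma geoSeg_compare (tree : IsRTree T) {x y p q : T} (hp : p ∈ geoSeg x y)
    (hq : q ∈ geoSeg x y) (hd : dist x p ≤ dist x q) : p ∈ geoSeg x q := by
  obtain ⟨γ, h0, -, hiso, him⟩ := tree.geodesic x y
  rw [← him] at hp hq
  obtain ⟨s, hs, rfl⟩ := hp
  obtain ⟨t, ht, rfl⟩ := hq
  have h0m : (0:ℝ) ∈ Icc (0:ℝ) (dist x y) := ⟨le_refl _, dist_nonneg⟩
  have hs' : dist x (γ s) = s := by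
    rw [← h0, hiso 0 h0m s hs, zero_sub, abs_neg, abs_of_nonneg hs.1]
  have ht' : dist x (γ t) = t := by
    rw [← h0, hiso 0 h0m t ht, zero_sub, abs_neg, abs_of_nonneg ht.1]
  have hst : s ≤ t := by rw [← hs', ← ht']; exact hd
  have hpq : dist (γ s) (γ t) = t - s := by
    rw [hiso s hs t ht, abs_of_nonpos (by linarith)]; ring
  simp only [geoSeg, Set.mem_setOf_eq]
  rw [hs', ht', hpq]; ring

lemma geoSeg_preconnected (tree : IsRTree T) (x y : T) : IsPreconnected (geoSeg x y) := by
  obtain ⟨γ, -, -, hiso, him⟩ := tree.geodesic x y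
  rw [← him]
  refine IsPreconnected.image isPreconnected_Icc γ ?_
  refine LipschitzOnWith.continuousOn (K := 1) (LipschitzOnWith.of_dist_le_mul ?_)
  intro s hs t ht
  rw [hiso s hs t ht, Real.dist_eq]
  simp

lemma comp_eq_of_mid (tree : IsRTree T) {ρ a p y z : T} (hpy : p ∈ geoSeg ρ y)
    (hpz : p ∈ geoSeg ρ z) (h : dist ρ a < dist ρ p) :
    connectedComponentIn ({a}ᶜ : Set T) y = connectedComponentIn ({a}ᶜ : Set T) z := by
  have hy : geoSeg p y ⊆ ({a}ᶜ : Set T) := by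
    intro q hq
    simp only [Set.mem_compl_iff, Set.mem_singleton_iff]
    rintro rfl
    exact notMem_geoSeg_of_lt hpy h hq
  have hz : geoSeg p z ⊆ ({a}ᶜ : Set T) := by
    intro q hq
    simp only [Set.mem_compl_iff, Set.mem_singleton_iff]
    rintro rfl
    exact notMem_geoSeg_of_lt hpz h hq
  have hconn : IsPreconnected (geoSeg p y ∪ geoSeg p z) :=
    IsPreconnected.union p (mem_geoSeg_left p y) (mem_geoSeg_left p z)
      (geoSeg_preconnected tree p y) (geoSeg_preconnected tree p z)
  have hsub : geoSeg p y ∪ geoSeg p z ⊆ ({a}ᶜ : Set T) := Set.union_subset hy hz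
  have h1 := hconn.subset_connectedComponentIn (Set.mem_union_left _ (mem_geoSeg_right p y)) hsub
  have h2 : z ∈ connectedComponentIn ({a}ᶜ : Set T) y :=
    h1 (Set.mem_union_right _ (mem_geoSeg_right p z))
  exact connectedComponentIn_eq h2

lemma ang_of_ne (P : PlaneRTree T) {x : T} {β : T × ℝ} (h : x ≠ β.1) :
    P.ang x β = P.u x β.1 := by
  rw [PlaneRTree.ang, if_neg h]

lemma ang_of_eq (P : PlaneRTree T) {x : T} {β : T × ℝ} (h : x = β.1) :
    P.ang x β = β.2 := by
  rw [PlaneRTree.ang, if_pos h]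

/-- In each of the three trichotomy cases, `cca x z` is pinned down and the
angle comparison transfers. -/
lemma leftOf_trans_aux (P : PlaneRTree T) (α β γ : T × ℝ)
    (h1 : P.leftOf α β) (h2 : P.leftOf β γ) : P.leftOf α γ := by
  set ρ := P.root with hρ
  set x := α.1 with hx
  set y := β.1 with hy
  set z := γ.1 with hz
  set a := P.cca x y with ha
  set b := P.cca y z with hb
  set c := P.cca x z with hc
  have hax : a ∈ geoSeg ρ x := (P.cca_mem x y).1
  have hay : a ∈ geoSeg ρ y := (P.cca_mem x y).2
  have hby : b ∈ geoSeg ρ y := (P.cca_mem y z).1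
  have hbz : b ∈ geoSeg ρ z := (P.cca_mem y z).2
  have hcx : c ∈ geoSeg ρ x := (P.cca_mem x z).1
  have hcz : c ∈ geoSeg ρ z := (P.cca_mem x z).2
  have h1' : P.ang a α < P.ang a β := h1
  have h2' : P.ang b β < P.ang b γ := h2
  show P.ang c α < P.ang c γ
  rcases lt_trichotomy (dist ρ a) (dist ρ b) with h | h | h
  · -- |a| < |b| : c = a and u a y = u a z
    have hab : a ∈ geoSeg ρ b := geoSeg_compare P.tree hay hby h.le
    have haz : a ∈ geoSeg ρ z := (geoSeg_chain hbz hab).1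
    have hca : c = a := by
      have hle1 : dist ρ a ≤ dist ρ c := P.cca_max x z a ⟨hax, haz⟩
      have hcy : c ∈ geoSeg ρ y := by
        rcases le_or_gt (dist ρ c) (dist ρ b) with hle | hlt
        · exact (geoSeg_chain hby (geoSeg_compare P.tree hcz hbz hle)).1
        · have hbc : b ∈ geoSeg ρ c := geoSeg_compare P.tree hbz hcz hlt.le
          have hbx : b ∈ geoSeg ρ x := (geoSeg_chain hcx hbc).1
          have := P.cca_max x y b ⟨hbx, hby⟩
          linarith
      have hle2 : dist ρ c ≤ dist ρ a := P.cca_max x y c ⟨hcx, hcy⟩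
      exact geoSeg_dist_unique P.tree hcx hax (le_antisymm hle2 hle1)
    have hya : y ≠ a := ne_of_lt_mem_geoSeg hby h
    have hza : z ≠ a := ne_of_lt_mem_geoSeg hbz h
    have hcomp := comp_eq_of_mid P.tree hby hbz h
    have hu : P.u a y = P.u a z := (P.u_eq_iff a y z hya hza).mpr hcomp
    rw [hca]
    calc P.ang a α < P.ang a β := h1'
      _ = P.ang a γ := by
        rw [ang_of_ne P (Ne.symm hya), ang_of_ne P (Ne.symm hza)]
        exact hu
  · -- |a| = |b| : a = b
    have hab : a = b := geoSeg_dist_unique P.tree hay hby h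
    have hlt : P.ang a α < P.ang a γ := h1'.trans (hab ▸ h2')
    have haz : a ∈ geoSeg ρ z := hab ▸ hbz
    have hle1 : dist ρ a ≤ dist ρ c := P.cca_max x z a ⟨hax, haz⟩
    rcases eq_or_lt_of_le hle1 with heq | hlt'
    · have hca : c = a := geoSeg_dist_unique P.tree hcx hax heq.symm
      rw [hca]; exact hlt
    · exfalso
      have hxa : x ≠ a := ne_of_lt_mem_geoSeg hcx hlt'
      have hza : z ≠ a := ne_of_lt_mem_geoSeg hcz hlt'
      have hcomp := comp_eq_of_mid P.tree hcx hcz hlt'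
      have hu : P.u a x = P.u a z := (P.u_eq_iff a x z hxa hza).mpr hcomp
      rw [ang_of_ne P (Ne.symm hxa), ang_of_ne P (Ne.symm hza), hu] at hlt
      exact lt_irrefl _ hlt
  · -- |b| < |a| : c = b and u b x = u b y
    have hba : b ∈ geoSeg ρ a := geoSeg_compare P.tree hby hay h.le
    have hbx : b ∈ geoSeg ρ x := (geoSeg_chain hax hba).1
    have hcb : c = b := by
      have hle1 : dist ρ b ≤ dist ρ c := P.cca_max x z b ⟨hbx, hbz⟩
      have hcy : c ∈ geoSeg ρ y := by
        rcases le_or_gt (dist ρ c) (dist ρ a) with hle | hlt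
        · exact (geoSeg_chain hay (geoSeg_compare P.tree hcx hax hle)).1
        · have hac : a ∈ geoSeg ρ c := geoSeg_compare P.tree hax hcx hlt.le
          have haz : a ∈ geoSeg ρ z := (geoSeg_chain hcz hac).1
          have := P.cca_max y z a ⟨hay, haz⟩
          linarith
      have hle2 : dist ρ c ≤ dist ρ b := P.cca_max y z c ⟨hcy, hcz⟩
      exact geoSeg_dist_unique P.tree hcz hbz (le_antisymm hle2 hle1)
    have hxb : x ≠ b := ne_of_lt_mem_geoSeg hax h
    have hyb : y ≠ b := ne_of_lt_mem_geoSeg hay h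
    have hcomp := comp_eq_of_mid P.tree hax hay h
    have hu : P.u b x = P.u b y := (P.u_eq_iff b x y hxb hyb).mpr hcomp
    rw [hcb]
    calc P.ang b α = P.ang b β := by
          rw [ang_of_ne P (Ne.symm hxb), ang_of_ne P (Ne.symm hyb)]
          exact hu
      _ < P.ang b γ := h2'

end Helpers

/-- On `T × [0,1]`, the relation `→` ("in front of") is a partial order (reflexive,
antisymmetric, transitive), and the relation `↷` ("at the left of") is a strict
partial order (irreflexive and transitive). -/
theorem frontOf_partialOrder_leftOf_strictOrder {T : Type*} [MetricSpace T]
    (P : PlaneRTree T) :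
    (∀ α : T × ℝ, α.2 ∈ Icc (0:ℝ) 1 → P.frontOf α α) ∧
    (∀ α β : T × ℝ, α.2 ∈ Icc (0:ℝ) 1 → β.2 ∈ Icc (0:ℝ) 1 →
      P.frontOf α β → P.frontOf β α → α = β) ∧
    (∀ α β γ : T × ℝ, α.2 ∈ Icc (0:ℝ) 1 → β.2 ∈ Icc (0:ℝ) 1 → γ.2 ∈ Icc (0:ℝ) 1 →
      P.frontOf α β → P.frontOf β γ → P.frontOf α γ) ∧
    (∀ α : T × ℝ, α.2 ∈ Icc (0:ℝ) 1 → ¬ P.leftOf α α) ∧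
    (∀ α β γ : T × ℝ, α.2 ∈ Icc (0:ℝ) 1 → β.2 ∈ Icc (0:ℝ) 1 → γ.2 ∈ Icc (0:ℝ) 1 →
      P.leftOf α β → P.leftOf β γ → P.leftOf α γ) := by
  refine ⟨?_, ?_, ?_, ?_, ?_⟩
  · -- reflexivity of frontOf
    intro α _
    exact ⟨mem_geoSeg_right _ _, ang_of_eq P rfl⟩
  · -- antisymmetry of frontOf
    intro α β _ _ hαβ hβα
    have hxy : α.1 = β.1 := geoSeg_antisymm hαβ.1 hβα.1
    have h2 : β.2 = α.2 := by rw [← hαβ.2, ang_of_eq P hxy]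
    exact Prod.ext hxy h2.symm
  · -- transitivity of frontOf
    intro α β γ _ _ _ hαβ hβγ
    obtain ⟨hxy, hang1⟩ := hαβ
    obtain ⟨hyz, hang2⟩ := hβγ
    have hxz : α.1 ∈ geoSeg P.root γ.1 := (geoSeg_chain hyz hxy).1
    refine ⟨hxz, ?_⟩
    by_cases hxy' : α.1 = β.1
    · rw [← hang1, ang_of_eq P hxy', ← hang2, hxy']
    · rw [ang_of_ne P hxy'] at hang1
      by_cases hyz' : β.1 = γ.1
      · rw [← hang1, ang_of_ne P (hyz' ▸ hxy'), hyz']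
      · have hxz' : α.1 ≠ γ.1 := by
          rintro he
          exact hyz' (geoSeg_antisymm hyz (he ▸ hxy))
        rw [ang_of_ne P hxz', ← hang1]
        have hy_ne : β.1 ≠ α.1 := fun e => hxy' e.symm
        have hz_ne : γ.1 ≠ α.1 := fun e => hxz' e.symm
        have hnot : α.1 ∉ geoSeg β.1 γ.1 := fun hmem =>
          hxy' (geoSeg_antisymm hxy (geoSeg_chain' hyz hmem).1)
        have hsub : geoSeg β.1 γ.1 ⊆ ({α.1}ᶜ : Set T) := by
          intro q hq
          simp only [Set.mem_compl_iff, Set.mem_singleton_iff]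
          rintro rfl
          exact hnot hq
        have hconn := geoSeg_preconnected P.tree β.1 γ.1
        have hcc := hconn.subset_connectedComponentIn (mem_geoSeg_right β.1 γ.1) hsub
        have hcomp : connectedComponentIn ({α.1}ᶜ : Set T) γ.1 =
            connectedComponentIn ({α.1}ᶜ : Set T) β.1 :=
          connectedComponentIn_eq (hcc (mem_geoSeg_left β.1 γ.1))
        exact (P.u_eq_iff α.1 γ.1 β.1 hz_ne hy_ne).mpr hcomp
  · -- irreflexivity of leftOf
    intro α _
    exact lt_irrefl _
  · -- transitivity of leftOf
    intro α β γ _ _ _ h1 h2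
    exact leftOf_trans_aux P α β γ h1 h2
end

section
/- Let (T,d,ρ,u) be a plane ℝ-tree. For all α, β, γ ∈ T×[0,1]: (a) if α ↷ β and β ↷ γ, then α ↷ γ; (b) if α ↷ β and β → γ, then α ↷ γ; (c) if α → β and β ↷ γ, then α ↷ γ or α → γ; (d) if α → β and β → γ, then α → γ. -/
open Set MeasureTheory Filter Metric

section Aux

variable {T : Type*} [MetricSpace T]

lemma geoSeg_height_le {ρ a b : T} (h : a ∈ geoSeg ρ b) : dist ρ a ≤ dist ρ b := by
  have h0 : (0:ℝ) ≤ dist a b := dist_nonneg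
  simp only [geoSeg, mem_setOf_eq] at h; linarith

lemma geoSeg_height_lt {ρ a b : T} (h : a ∈ geoSeg ρ b) (hne : a ≠ b) :
    dist ρ a < dist ρ b := by
  have h0 : (0:ℝ) < dist a b := dist_pos.mpr hne
  simp only [geoSeg, mem_setOf_eq] at h; linarith

lemma geoSeg_trans' {ρ x y z : T} (h1 : x ∈ geoSeg ρ y) (h2 : y ∈ geoSeg ρ z) :
    x ∈ geoSeg ρ z := by
  simp only [geoSeg, mem_setOf_eq] at *
  have t1 := dist_triangle x y z
  have t2 := dist_triangle ρ x z
  linarith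

lemma geoSeg_height_add {ρ c z p : T} (hc : c ∈ geoSeg ρ z) (hp : p ∈ geoSeg c z) :
    dist ρ p = dist ρ c + dist c p := by
  simp only [geoSeg, mem_setOf_eq] at hc hp
  have t1 := dist_triangle ρ c p
  have t2 := dist_triangle ρ p z
  linarith

lemma seg_dist {x y a b : T} (ht : IsRTree T) (ha : a ∈ geoSeg x y) (hb : b ∈ geoSeg x y) :
    dist a b = |dist x a - dist x b| := by
  obtain ⟨γ, h0, hd, hiso, himg⟩ := ht.geodesic x y
  rw [← himg] at ha hb
  obtain ⟨s, hs, rfl⟩ := ha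
  obtain ⟨t, ht', rfl⟩ := hb
  have h0mem : (0:ℝ) ∈ Icc (0:ℝ) (dist x y) := ⟨le_refl _, dist_nonneg⟩
  have hxa : dist x (γ s) = s := by
    have := hiso 0 h0mem s hs
    rw [h0] at this
    rw [this, abs_sub_comm, sub_zero, abs_of_nonneg hs.1]
  have hxb : dist x (γ t) = t := by
    have := hiso 0 h0mem t ht'
    rw [h0] at this
    rw [this, abs_sub_comm, sub_zero, abs_of_nonneg ht'.1]
  rw [hiso s hs t ht', hxa, hxb]

lemma mem_of_height_le {ρ y a b : T} (ht : IsRTree T) (ha : a ∈ geoSeg ρ y)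
    (hb : b ∈ geoSeg ρ y) (h : dist ρ a ≤ dist ρ b) : a ∈ geoSeg ρ b := by
  have hd := seg_dist ht ha hb
  simp only [geoSeg, mem_setOf_eq]
  rw [hd, abs_of_nonpos (by linarith)]
  ring

lemma seg_eq_of_height {x y a b : T} (ht : IsRTree T) (ha : a ∈ geoSeg x y)
    (hb : b ∈ geoSeg x y) (h : dist x a = dist x b) : a = b := by
  have hd := seg_dist ht ha hb
  rw [h, sub_self, abs_zero] at hd
  exact dist_eq_zero.mp hd

lemma geoSeg_preconn (ht : IsRTree T) (x y : T) : IsPreconnected (geoSeg x y) := by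
  obtain ⟨γ, h0, hd, hiso, himg⟩ := ht.geodesic x y
  rw [← himg]
  apply IsPreconnected.image isPreconnected_Icc
  apply LipschitzOnWith.continuousOn (K := 1)
  apply LipschitzOnWith.of_dist_le_mul
  intro s hs t ht'
  rw [hiso s hs t ht']
  simp [Real.dist_eq]

lemma comp_eq_of_connected {m y z : T} {S : Set T} (hS : IsPreconnected S)
    (hy : y ∈ S) (hz : z ∈ S) (hm : S ⊆ {m}ᶜ) :
    connectedComponentIn ({m}ᶜ) y = connectedComponentIn ({m}ᶜ) z := by
  have h1 := hS.subset_connectedComponentIn hy hm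
  exact connectedComponentIn_eq (h1 hz)

lemma u_eq_join (P : PlaneRTree T) {m c y z : T}
    (hcy : c ∈ geoSeg P.root y) (hcz : c ∈ geoSeg P.root z)
    (hm : dist P.root m < dist P.root c) (hym : y ≠ m) (hzm : z ≠ m) :
    P.u m y = P.u m z := by
  have hpre : IsPreconnected (geoSeg c y ∪ geoSeg c z) :=
    IsPreconnected.union c (mem_geoSeg_left c y) (mem_geoSeg_left c z)
      (geoSeg_preconn P.tree c y) (geoSeg_preconn P.tree c z)
  have hsub : (geoSeg c y ∪ geoSeg c z) ⊆ {m}ᶜ := by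
    rintro p hp
    have hgt : dist P.root c ≤ dist P.root p := by
      rcases hp with hp | hp
      · rw [geoSeg_height_add hcy hp]
        have := dist_nonneg (x := c) (y := p); linarith
      · rw [geoSeg_height_add hcz hp]
        have := dist_nonneg (x := c) (y := p); linarith
    simp only [mem_compl_iff, mem_singleton_iff]
    rintro rfl
    linarith
  exact (P.u_eq_iff m y z hym hzm).mpr
    (comp_eq_of_connected hpre (Or.inl (mem_geoSeg_right c y))
      (Or.inr (mem_geoSeg_right c z)) hsub)

end Aux

/-- For all `α, β, γ ∈ T × [0,1]`:
(a) if `α ↷ β` and `β ↷ γ` then `α ↷ γ`;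
(b) if `α ↷ β` and `β → γ` then `α ↷ γ`;
(c) if `α → β` and `β ↷ γ` then `α ↷ γ` or `α → γ`;
(d) if `α → β` and `β → γ` then `α → γ`. -/
theorem leftOf_frontOf_compositions {T : Type*} [MetricSpace T] (P : PlaneRTree T)
    (α β γ : T × ℝ) (hα : α.2 ∈ Icc (0:ℝ) 1) (hβ : β.2 ∈ Icc (0:ℝ) 1)
    (hγ : γ.2 ∈ Icc (0:ℝ) 1) :
    (P.leftOf α β → P.leftOf β γ → P.leftOf α γ) ∧
    (P.leftOf α β → P.frontOf β γ → P.leftOf α γ) ∧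
    (P.frontOf α β → P.leftOf β γ → P.leftOf α γ ∨ P.frontOf α γ) ∧
    (P.frontOf α β → P.frontOf β γ → P.frontOf α γ) := by
  obtain ⟨x, v⟩ := α
  obtain ⟨y, w⟩ := β
  obtain ⟨z, r⟩ := γ
  clear hα hβ hγ
  have tr := P.tree
  have hm1x : P.cca x y ∈ geoSeg P.root x := (P.cca_mem x y).1
  have hm1y : P.cca x y ∈ geoSeg P.root y := (P.cca_mem x y).2
  have hm2y : P.cca y z ∈ geoSeg P.root y := (P.cca_mem y z).1
  have hm2z : P.cca y z ∈ geoSeg P.root z := (P.cca_mem y z).2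
  have hm3x : P.cca x z ∈ geoSeg P.root x := (P.cca_mem x z).1
  have hm3z : P.cca x z ∈ geoSeg P.root z := (P.cca_mem x z).2
  refine ⟨?_, ?_, ?_, ?_⟩
  · -- (a) leftOf, leftOf → leftOf
    intro hab hbc
    simp only [PlaneRTree.leftOf] at hab hbc ⊢
    rcases lt_trichotomy (dist P.root (P.cca x y)) (dist P.root (P.cca y z)) with h | h | h
    · -- m1 strictly below m2; then m3 = m1
      have h12 : P.cca x y ∈ geoSeg P.root (P.cca y z) := mem_of_height_le tr hm1y hm2y h.le
      have hm1z : P.cca x y ∈ geoSeg P.root z := geoSeg_trans' h12 hm2z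
      have hle : dist P.root (P.cca x y) ≤ dist P.root (P.cca x z) :=
        P.cca_max x z (P.cca x y) ⟨hm1x, hm1z⟩
      have hge : dist P.root (P.cca x z) ≤ dist P.root (P.cca x y) := by
        by_contra hc
        push_neg at hc
        rcases le_or_gt (dist P.root (P.cca x z)) (dist P.root (P.cca y z)) with h' | h'
        · have h32 : P.cca x z ∈ geoSeg P.root (P.cca y z) := mem_of_height_le tr hm3z hm2z h'
          have h3y : P.cca x z ∈ geoSeg P.root y := geoSeg_trans' h32 hm2y
          have := P.cca_max x y (P.cca x z) ⟨hm3x, h3y⟩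
          linarith
        · have h23 : P.cca y z ∈ geoSeg P.root (P.cca x z) := mem_of_height_le tr hm2z hm3z h'.le
          have h2x : P.cca y z ∈ geoSeg P.root x := geoSeg_trans' h23 hm3x
          have := P.cca_max x y (P.cca y z) ⟨h2x, hm2y⟩
          linarith
      have hm31 : P.cca x z = P.cca x y := seg_eq_of_height tr hm3x hm1x (le_antisymm hge hle)
      have hne_y : P.cca x y ≠ y := by
        intro he
        have he' : dist P.root (P.cca x y) = dist P.root y := by rw [he]
        have := geoSeg_height_le hm2y
        linarith
      have hne_z : P.cca x y ≠ z := by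
        intro he
        have he' : dist P.root (P.cca x y) = dist P.root z := by rw [he]
        have := geoSeg_height_le hm2z
        linarith
      have hu : P.u (P.cca x y) y = P.u (P.cca x y) z :=
        u_eq_join P hm2y hm2z h (Ne.symm hne_y) (Ne.symm hne_z)
      rw [hm31]
      calc P.ang (P.cca x y) (x, v) < P.ang (P.cca x y) (y, w) := hab
        _ = P.ang (P.cca x y) (z, r) := by simp [PlaneRTree.ang, hne_y, hne_z, hu]
    · -- m1 = m2 (as heights, hence as points)
      have hm12 : P.cca x y = P.cca y z := seg_eq_of_height tr hm1y hm2y h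
      have hm1z : P.cca x y ∈ geoSeg P.root z := by rw [hm12]; exact hm2z
      have hle : dist P.root (P.cca x y) ≤ dist P.root (P.cca x z) :=
        P.cca_max x z (P.cca x y) ⟨hm1x, hm1z⟩
      have hge : dist P.root (P.cca x z) ≤ dist P.root (P.cca x y) := by
        by_contra hc
        push_neg at hc
        have hne_x : P.cca x y ≠ x := by
          intro he
          have he' : dist P.root (P.cca x y) = dist P.root x := by rw [he]
          have := geoSeg_height_le hm3x
          linarith
        have hne_z : P.cca x y ≠ z := by
          intro he
          have he' : dist P.root (P.cca x y) = dist P.root z := by rw [he]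
          have := geoSeg_height_le hm3z
          linarith
        have hu : P.u (P.cca x y) x = P.u (P.cca x y) z :=
          u_eq_join P hm3x hm3z hc (Ne.symm hne_x) (Ne.symm hne_z)
        rw [← hm12] at hbc
        have hlt := hab.trans hbc
        have e1 : P.ang (P.cca x y) (x, v) = P.u (P.cca x y) x := by
          simp [PlaneRTree.ang, hne_x]
        have e2 : P.ang (P.cca x y) (z, r) = P.u (P.cca x y) z := by
          simp [PlaneRTree.ang, hne_z]
        rw [e1, e2, hu] at hlt
        exact lt_irrefl _ hlt
      have hm31 : P.cca x z = P.cca x y := seg_eq_of_height tr hm3x hm1x (le_antisymm hge hle)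
      rw [hm31]
      rw [← hm12] at hbc
      exact hab.trans hbc
    · -- m2 strictly below m1; then m3 = m2
      have h21 : P.cca y z ∈ geoSeg P.root (P.cca x y) := mem_of_height_le tr hm2y hm1y h.le
      have hm2x : P.cca y z ∈ geoSeg P.root x := geoSeg_trans' h21 hm1x
      have hle : dist P.root (P.cca y z) ≤ dist P.root (P.cca x z) :=
        P.cca_max x z (P.cca y z) ⟨hm2x, hm2z⟩
      have hge : dist P.root (P.cca x z) ≤ dist P.root (P.cca y z) := by
        rcases le_or_gt (dist P.root (P.cca x z)) (dist P.root (P.cca x y)) with h' | h'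
        · have h31 : P.cca x z ∈ geoSeg P.root (P.cca x y) := mem_of_height_le tr hm3x hm1x h'
          have h3y : P.cca x z ∈ geoSeg P.root y := geoSeg_trans' h31 hm1y
          exact P.cca_max y z (P.cca x z) ⟨h3y, hm3z⟩
        · exfalso
          have h13 : P.cca x y ∈ geoSeg P.root (P.cca x z) := mem_of_height_le tr hm1x hm3x h'.le
          have h1z : P.cca x y ∈ geoSeg P.root z := geoSeg_trans' h13 hm3z
          have := P.cca_max y z (P.cca x y) ⟨hm1y, h1z⟩
          linarith
      have hm32 : P.cca x z = P.cca y z := seg_eq_of_height tr hm3z hm2z (le_antisymm hge hle)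
      have hne_x : P.cca y z ≠ x := by
        intro he
        have he' : dist P.root (P.cca y z) = dist P.root x := by rw [he]
        have := geoSeg_height_le hm1x
        linarith
      have hne_y : P.cca y z ≠ y := by
        intro he
        have he' : dist P.root (P.cca y z) = dist P.root y := by rw [he]
        have := geoSeg_height_le hm1y
        linarith
      have hu : P.u (P.cca y z) x = P.u (P.cca y z) y :=
        u_eq_join P hm1x hm1y h (Ne.symm hne_x) (Ne.symm hne_y)
      rw [hm32]
      calc P.ang (P.cca y z) (x, v) = P.ang (P.cca y z) (y, w) := by
            simp [PlaneRTree.ang, hne_x, hne_y, hu]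
        _ < P.ang (P.cca y z) (z, r) := hbc
  · -- (b) leftOf, frontOf → leftOf
    intro hab hbc
    obtain ⟨hyz, hangy⟩ := hbc
    simp only [PlaneRTree.leftOf] at hab ⊢
    have hm1z : P.cca x y ∈ geoSeg P.root z := geoSeg_trans' hm1y hyz
    have hle : dist P.root (P.cca x y) ≤ dist P.root (P.cca x z) :=
      P.cca_max x z (P.cca x y) ⟨hm1x, hm1z⟩
    have hge : dist P.root (P.cca x z) ≤ dist P.root (P.cca x y) := by
      by_contra hc
      push_neg at hc
      rcases le_or_gt (dist P.root (P.cca x z)) (dist P.root y) with h' | h'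
      · have h3y : P.cca x z ∈ geoSeg P.root y := mem_of_height_le tr hm3z hyz h'
        have := P.cca_max x y (P.cca x z) ⟨hm3x, h3y⟩
        linarith
      · have hy3 : y ∈ geoSeg P.root (P.cca x z) := mem_of_height_le tr hyz hm3z h'.le
        have hyx : y ∈ geoSeg P.root x := geoSeg_trans' hy3 hm3x
        have hy1 : dist P.root y ≤ dist P.root (P.cca x y) :=
          P.cca_max x y y ⟨hyx, mem_geoSeg_right P.root y⟩
        have hm1y' : P.cca x y = y := seg_eq_of_height tr hm1y (mem_geoSeg_right P.root y)
          (le_antisymm (geoSeg_height_le hm1y) hy1)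
        have hne_z : y ≠ z := by
          intro he
          have he' : dist P.root y = dist P.root z := by rw [he]
          have := geoSeg_height_le hm3z
          linarith
        have hne_x : y ≠ x := by
          intro he
          have he' : dist P.root y = dist P.root x := by rw [he]
          have := geoSeg_height_le hm3x
          linarith
        have hu : P.u y x = P.u y z :=
          u_eq_join P hm3x hm3z h' (Ne.symm hne_x) (Ne.symm hne_z)
        rw [hm1y'] at hab
        have e1 : P.ang y (x, v) = P.u y x := by simp [PlaneRTree.ang, hne_x]
        have e2 : P.ang y (y, w) = w := by simp [PlaneRTree.ang]
        have e3 : P.ang y (z, r) = P.u y z := by simp [PlaneRTree.ang, hne_z]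
        rw [e1, e2] at hab
        rw [e3] at hangy
        rw [hu, hangy] at hab
        exact lt_irrefl _ hab
    have hm31 : P.cca x z = P.cca x y := seg_eq_of_height tr hm3x hm1x (le_antisymm hge hle)
    rw [hm31]
    have key : P.ang (P.cca x y) (z, r) = P.ang (P.cca x y) (y, w) := by
      by_cases hm1ey : P.cca x y = y
      · rw [hm1ey, hangy]
        simp [PlaneRTree.ang]
      · have hne_z : P.cca x y ≠ z := by
          intro he
          apply hm1ey
          have hymem : y ∈ geoSeg P.root (P.cca x y) := by rw [he]; exact hyz
          exact seg_eq_of_height tr hm1y (mem_geoSeg_right P.root y)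
            (le_antisymm (geoSeg_height_le hm1y) (geoSeg_height_le hymem))
        have hm1lt : dist P.root (P.cca x y) < dist P.root y := geoSeg_height_lt hm1y hm1ey
        have hu : P.u (P.cca x y) y = P.u (P.cca x y) z :=
          u_eq_join P (mem_geoSeg_right P.root y) hyz hm1lt (Ne.symm hm1ey) (Ne.symm hne_z)
        simp [PlaneRTree.ang, hm1ey, hne_z, hu]
    rw [key]
    exact hab
  · -- (c) frontOf, leftOf → leftOf ∨ frontOf
    intro hab hbc
    obtain ⟨hxy, hangx⟩ := hab
    dsimp only at hxy hangx
    simp only [PlaneRTree.leftOf, PlaneRTree.frontOf] at hbc ⊢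
    rcases lt_trichotomy (dist P.root x) (dist P.root (P.cca y z)) with h | h | h
    · -- x strictly below m2 : frontOf
      right
      have hx2 : x ∈ geoSeg P.root (P.cca y z) := mem_of_height_le tr hxy hm2y h.le
      have hxz : x ∈ geoSeg P.root z := geoSeg_trans' hx2 hm2z
      refine ⟨hxz, ?_⟩
      have hne_y : x ≠ y := by
        intro he
        have he' : dist P.root x = dist P.root y := by rw [he]
        have := geoSeg_height_le hm2y
        linarith
      have hne_z : x ≠ z := by
        intro he
        have he' : dist P.root x = dist P.root z := by rw [he]
        have := geoSeg_height_le hm2z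
        linarith
      have hu : P.u x y = P.u x z := u_eq_join P hm2y hm2z h (Ne.symm hne_y) (Ne.symm hne_z)
      have e1 : P.ang x (y, w) = P.u x y := by simp [PlaneRTree.ang, hne_y]
      calc P.ang x (z, r) = P.u x z := by simp [PlaneRTree.ang, hne_z]
        _ = P.u x y := hu.symm
        _ = P.ang x (y, w) := e1.symm
        _ = v := hangx
    · -- x = m2 : leftOf
      left
      have hxm2 : x = P.cca y z := seg_eq_of_height tr hxy hm2y h
      have hxz : x ∈ geoSeg P.root z := by rw [hxm2]; exact hm2z
      have hle : dist P.root x ≤ dist P.root (P.cca x z) :=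
        P.cca_max x z x ⟨mem_geoSeg_right P.root x, hxz⟩
      have hge : dist P.root (P.cca x z) ≤ dist P.root x := geoSeg_height_le hm3x
      have hm3x' : P.cca x z = x :=
        seg_eq_of_height tr hm3x (mem_geoSeg_right P.root x) (le_antisymm hge hle)
      rw [hm3x']
      have e1 : P.ang x (x, v) = v := by simp [PlaneRTree.ang]
      rw [e1, ← hangx, hxm2]
      exact hbc
    · -- m2 strictly below x : leftOf, m3 = m2
      left
      have h2x : P.cca y z ∈ geoSeg P.root x := mem_of_height_le tr hm2y hxy h.le
      have hne_x : P.cca y z ≠ x := by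
        intro he
        rw [he] at h
        exact lt_irrefl _ h
      have hne_y : P.cca y z ≠ y := by
        intro he
        have he' : dist P.root (P.cca y z) = dist P.root y := by rw [he]
        have := geoSeg_height_le hxy
        linarith
      have hu_xy : P.u (P.cca y z) x = P.u (P.cca y z) y :=
        u_eq_join P (mem_geoSeg_right P.root x) hxy h (Ne.symm hne_x) (Ne.symm hne_y)
      have hle : dist P.root (P.cca y z) ≤ dist P.root (P.cca x z) :=
        P.cca_max x z (P.cca y z) ⟨h2x, hm2z⟩
      have hge : dist P.root (P.cca x z) ≤ dist P.root (P.cca y z) := by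
        by_contra hc
        push_neg at hc
        have hne_z : P.cca y z ≠ z := by
          intro he
          have he' : dist P.root (P.cca y z) = dist P.root z := by rw [he]
          have := geoSeg_height_le hm3z
          linarith
        have hu_xz : P.u (P.cca y z) x = P.u (P.cca y z) z :=
          u_eq_join P hm3x hm3z hc (Ne.symm hne_x) (Ne.symm hne_z)
        have e1 : P.ang (P.cca y z) (y, w) = P.u (P.cca y z) y := by
          simp [PlaneRTree.ang, hne_y]
        have e2 : P.ang (P.cca y z) (z, r) = P.u (P.cca y z) z := by
          simp [PlaneRTree.ang, hne_z]
        rw [e1, e2, ← hu_xy, ← hu_xz] at hbc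
        exact lt_irrefl _ hbc
      have hm32 : P.cca x z = P.cca y z := seg_eq_of_height tr hm3z hm2z (le_antisymm hge hle)
      rw [hm32]
      calc P.ang (P.cca y z) (x, v) = P.u (P.cca y z) x := by simp [PlaneRTree.ang, hne_x]
        _ = P.u (P.cca y z) y := hu_xy
        _ = P.ang (P.cca y z) (y, w) := by simp [PlaneRTree.ang, hne_y]
        _ < P.ang (P.cca y z) (z, r) := hbc
  · -- (d) frontOf, frontOf → frontOf
    rintro ⟨hxy, hangx⟩ ⟨hyz, hangy⟩
    dsimp only at hxy hangx hyz hangy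
    refine ⟨geoSeg_trans' hxy hyz, ?_⟩
    show P.ang x (z, r) = v
    by_cases hxey : x = y
    · subst hxey
      simp only [PlaneRTree.ang, if_pos rfl] at hangx
      rw [hangy]
      exact hangx
    · have hvu : P.u x y = v := by
        have e1 : P.ang x (y, w) = P.u x y := by simp [PlaneRTree.ang, hxey]
        rw [e1] at hangx
        exact hangx
      have hne_z : x ≠ z := by
        intro he
        rw [← he] at hyz
        have h1 : dist P.root y ≤ dist P.root x := geoSeg_height_le hyz
        have h2 : dist P.root x ≤ dist P.root y := geoSeg_height_le hxy
        exact hxey (seg_eq_of_height tr hxy (mem_geoSeg_right P.root y) (le_antisymm h2 h1))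
      have hlt : dist P.root x < dist P.root y := geoSeg_height_lt hxy hxey
      have hu : P.u x y = P.u x z :=
        u_eq_join P (mem_geoSeg_right P.root y) hyz hlt (Ne.symm hxey) (Ne.symm hne_z)
      calc P.ang x (z, r) = P.u x z := by simp [PlaneRTree.ang, hne_z]
        _ = P.u x y := hu.symm
        _ = v := hvu
end

section
/- Let (T,d,ρ,u) be a plane ℝ-tree and let p be a Borel probability measure on T. Then for every α ∈ T×[0,1], p_↶(α) + p_→(α) + p_↷(α) = 1. -/
open Set MeasureTheory Filter Metric

namespace PlaneRTree

variable {T : Type*} [MetricSpace T] [MeasurableSpace T] [BorelSpace T]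

/-- The measure `p_L`, product of `p` with Lebesgue measure on `[0,1]`. -/
noncomputable def pL (p : Measure T) : Measure (T × ℝ) :=
  p.prod (volume.restrict (Icc (0:ℝ) 1))

/-- `p_↶(α) = p_L {β : β ↷ α}`, the mass at the left of `α`. -/
noncomputable def pleft (P : PlaneRTree T) (p : Measure T) (α : T × ℝ) : ℝ :=
  (pL p {β : T × ℝ | P.leftOf β α}).toReal

/-- `p_→(α) = p_L {β : α → β}`, the mass in front of `α`. -/
noncomputable def pfront (P : PlaneRTree T) (p : Measure T) (α : T × ℝ) : ℝ :=
  (pL p {β : T × ℝ | P.frontOf α β}).toReal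

/-- `p_↷(α) = p_L {β : α ↷ β}`, the mass at the right of `α`. -/
noncomputable def pright (P : PlaneRTree T) (p : Measure T) (α : T × ℝ) : ℝ :=
  (pL p {β : T × ℝ | P.leftOf α β}).toReal

end PlaneRTree

/-!
Write `m` for the closest common ancestor of `α.1` and `β.1`. Both `β ↷ α` and `α ↷ β` compare
the angles of `α` and `β` at `m`. If these angles agree, then either `m = α.1`, which means
`α → β`, or `m = β.1`, which means that `β` lies on the graph of `y ↦ u(y, (α.1, α.2))` over
`[[ρ, α.1]]`; when `m` differs from both, equal angles would put `α.1` and `β.1` in the same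
component of `T \ {m}`. So the three sets are pairwise disjoint and cover `T × ℝ` up to that
graph. By balancedness, `u(y, α.1) = 1/2` at every point `y ≠ ρ, α.1` of `[[ρ, α.1]]` of
degree two (there `u(y, α.1) ≠ u(y, ρ) = 0`), and the branch points on `[[ρ, α.1]]` are countable,
each being `m(α.1, q)` for `q` in a countable dense set. Hence the graph lies in `T × C` with `C`
countable, a `p_L`-null set. The same description gives measurability: off `[[ρ, α.1]]` the three
relations are locally constant in `β`, and on it they are cut out by `y ↦ u(y, α)`, which is
constant off a countable set.
-/

theorem Path.injective_trans {X : Type*} [TopologicalSpace X] {x y z : X} {γ : Path x y}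
    {γ' : Path y z} (hγ : Function.Injective γ) (hγ' : Function.Injective γ')
    (h : range γ ∩ range γ' ⊆ {y}) : Function.Injective (γ.trans γ') := by
  have hend : ∀ s t, γ s = γ' t → (s : ℝ) = 1 ∧ (t : ℝ) = 0 := fun s t hst => by
    have hy : γ s = y := h ⟨⟨s, rfl⟩, ⟨t, hst.symm⟩⟩
    refine ⟨congrArg Subtype.val (hγ (hy.trans γ.target.symm)), ?_⟩
    exact congrArg Subtype.val (hγ' ((hst.symm.trans hy).trans γ'.source.symm))
  intro s t hst
  rw [Path.trans_apply, Path.trans_apply] at hst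
  apply Subtype.ext
  split_ifs at hst with hs ht ht
  · have := congrArg Subtype.val (hγ hst)
    simp only at this
    linarith
  · linarith [(hend _ _ hst).2]
  · linarith [(hend _ _ hst.symm).2]
  · have := congrArg Subtype.val (hγ' hst)
    simp only at this
    linarith

theorem Path.image_extend_Icc {X : Type*} [TopologicalSpace X] {x y : X} (γ : Path x y) :
    γ.extend '' Icc 0 1 = range γ := by
  ext z
  constructor
  · rintro ⟨t, ht, rfl⟩
    exact ⟨⟨t, ht⟩, (γ.extend_apply ht).symm⟩
  · rintro ⟨t, rfl⟩
    exact ⟨t, t.2, γ.extend_apply t.2⟩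

theorem unitInterval.coe_mul_mem_Icc (t : unitInterval) {l : ℝ} (hl : 0 ≤ l) :
    (t : ℝ) * l ∈ Icc 0 l :=
  ⟨mul_nonneg t.2.1 hl, mul_le_of_le_one_left hl t.2.2⟩

namespace MeasureTheory

theorem measurableSet_setOf_mem_of_countable {α γ : Type*} [MeasurableSpace α]
    [MeasurableSingletonClass α] [MeasurableSpace γ] {s E : Set α} {t : Set γ} {R : α → Set γ}
    (hs : MeasurableSet s) (hE : E.Countable) (ht : MeasurableSet t)
    (hR : ∀ a ∈ E, MeasurableSet (R a)) (hRt : ∀ a ∈ s \ E, R a = t) :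
    MeasurableSet {p : α × γ | p.1 ∈ s ∧ p.2 ∈ R p.1} := by
  have hsplit : {p : α × γ | p.1 ∈ s ∧ p.2 ∈ R p.1} =
      (s \ E) ×ˢ t ∪ ⋃ a ∈ E, (s ∩ {a}) ×ˢ R a := by
    ext ⟨a, c⟩
    by_cases ha : a ∈ E
    · simp [ha]
    · have hRa : a ∈ s → R a = t := fun hs => hRt a ⟨hs, ha⟩
      aesop
  rw [hsplit]
  exact ((hs.diff hE.measurableSet).prod ht).union
    (.biUnion hE fun a ha => (hs.inter (measurableSet_singleton a)).prod (hR a ha))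

theorem toReal_measure_add_add_eq_one {Ω : Type*} [MeasurableSpace Ω] {μ : Measure Ω}
    [IsProbabilityMeasure μ] {s₁ s₂ s₃ : Set Ω} (h₁ : MeasurableSet s₁) (h₂ : MeasurableSet s₂)
    (h₃ : MeasurableSet s₃) (h₁₂ : Disjoint s₁ s₂) (h₁₃ : Disjoint s₁ s₃) (h₂₃ : Disjoint s₂ s₃)
    (hnull : μ (s₁ ∪ s₂ ∪ s₃)ᶜ = 0) : (μ s₁).toReal + (μ s₂).toReal + (μ s₃).toReal = 1 := by
  have h := (prob_compl_eq_zero_iff ((h₁.union h₂).union h₃)).mp hnull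
  rw [measure_union (disjoint_union_left.mpr ⟨h₁₃, h₂₃⟩) h₃, measure_union h₁₂ h₂] at h
  rw [← ENNReal.toReal_add (measure_ne_top _ _) (measure_ne_top _ _),
    ← ENNReal.toReal_add (by finiteness) (measure_ne_top _ _), h, ENNReal.toReal_one]

end MeasureTheory

namespace PlaneRTree

variable {T : Type*} [MeasurableSpace T]

instance isProbabilityMeasure_pL (p : Measure T) [IsProbabilityMeasure p] :
    IsProbabilityMeasure (pL p) := by
  have : IsProbabilityMeasure (volume.restrict (Icc (0 : ℝ) 1)) := ⟨by simp⟩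
  unfold pL
  infer_instance

theorem pL_univ_prod_eq_zero (p : Measure T) {C : Set ℝ} (hC : C.Countable) :
    pL p (univ ×ˢ C) = 0 := by
  rw [pL, Measure.prod_prod, hC.measure_zero, mul_zero]

end PlaneRTree

section MetricSegment

variable {T : Type*} [MetricSpace T] {a b y z : T}

theorem mem_geoSeg : z ∈ geoSeg a b ↔ dist a z + dist z b = dist a b := Iff.rfl

theorem geoSeg_comm (a b : T) : geoSeg a b = geoSeg b a := by
  ext z
  rw [mem_geoSeg, mem_geoSeg, dist_comm b z, dist_comm z a, dist_comm b a, add_comm]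

theorem left_mem_geoSeg (a b : T) : a ∈ geoSeg a b := by simp [mem_geoSeg]

theorem right_mem_geoSeg (a b : T) : b ∈ geoSeg a b := by simp [mem_geoSeg]

theorem geoSeg_self (a : T) : geoSeg a a = {a} := by
  ext z
  simp [mem_geoSeg, dist_comm z a, eq_comm]

theorem isClosed_geoSeg (a b : T) : IsClosed (geoSeg a b) :=
  isClosed_eq (by fun_prop) continuous_const

theorem isOpen_setOf_notMem_geoSeg (a y : T) : IsOpen {z | y ∉ geoSeg a z} :=
  (isClosed_eq (by fun_prop) (by fun_prop) :
    IsClosed {z | dist a y + dist y z = dist a z}).isOpen_compl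

theorem geoSeg_left_subset (hz : z ∈ geoSeg a b) : geoSeg a z ⊆ geoSeg a b := fun w hw => by
  rw [mem_geoSeg] at *
  linarith [dist_triangle w z b, dist_triangle a w b]

theorem geoSeg_right_subset (hz : z ∈ geoSeg a b) : geoSeg z b ⊆ geoSeg a b := fun w hw => by
  rw [mem_geoSeg] at *
  linarith [dist_triangle a z w, dist_triangle a w b]

end MetricSegment

namespace IsRTree

variable {T : Type*} [MetricSpace T] (hT : IsRTree T) {a b c m y z : T}
include hT

/-- The geodesic from `a` to `b`, parametrised by `[0,1]` at constant speed. -/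
noncomputable def segPath (a b : T) : Path a b where
  toFun t := (hT.geodesic a b).choose (t * dist a b)
  continuous_toFun := by
    obtain ⟨-, -, hiso, -⟩ := (hT.geodesic a b).choose_spec
    refine (LipschitzWith.of_dist_le_mul (K := ⟨dist a b, dist_nonneg⟩) fun s t => ?_).continuous
    rw [hiso _ (unitInterval.coe_mul_mem_Icc s dist_nonneg) _
      (unitInterval.coe_mul_mem_Icc t dist_nonneg), ← sub_mul, abs_mul, abs_of_nonneg dist_nonneg,
      mul_comm]
    rfl
  source' := by simpa using (hT.geodesic a b).choose_spec.1
  target' := by simpa using (hT.geodesic a b).choose_spec.2.1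

theorem dist_segPath (s t : unitInterval) :
    dist (hT.segPath a b s) (hT.segPath a b t) = |(s : ℝ) - t| * dist a b := by
  obtain ⟨-, -, hiso, -⟩ := (hT.geodesic a b).choose_spec
  rw [← abs_of_nonneg (dist_nonneg (x := a) (y := b)), ← abs_mul, sub_mul]
  exact hiso _ (unitInterval.coe_mul_mem_Icc s dist_nonneg) _
    (unitInterval.coe_mul_mem_Icc t dist_nonneg)

theorem dist_segPath_left (t : unitInterval) : dist a (hT.segPath a b t) = t * dist a b := by
  simpa [abs_of_nonneg t.2.1] using hT.dist_segPath (a := a) (b := b) 0 t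

theorem dist_segPath_right (t : unitInterval) :
    dist (hT.segPath a b t) b = (1 - t) * dist a b := by
  simpa [abs_of_nonpos (sub_nonpos.mpr t.2.2)] using hT.dist_segPath (a := a) (b := b) t 1

theorem range_segPath (a b : T) : range (hT.segPath a b) = geoSeg a b := by
  refine Subset.antisymm ?_ fun z hz => ?_
  · rintro _ ⟨t, rfl⟩
    rw [mem_geoSeg, hT.dist_segPath_left, hT.dist_segPath_right]
    ring
  obtain ⟨hγa, -, -, himage⟩ := (hT.geodesic a b).choose_spec
  obtain ⟨s, hs, rfl⟩ := himage.symm ▸ hz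
  rcases eq_or_lt_of_le (dist_nonneg : 0 ≤ dist a b) with hab | hab
  · refine ⟨0, ?_⟩
    rw [Path.source, le_antisymm (hab ▸ hs.2) hs.1, hγa]
  · refine ⟨⟨s / dist a b, div_nonneg hs.1 hab.le, div_le_one_of_le₀ hs.2 hab.le⟩, ?_⟩
    change (hT.geodesic a b).choose (s / dist a b * dist a b) = _
    rw [div_mul_cancel₀ _ hab.ne']

theorem isCompact_geoSeg (a b : T) : IsCompact (geoSeg a b) :=
  hT.range_segPath a b ▸ isCompact_range (hT.segPath a b).continuous

theorem injective_segPath (h : a ≠ b) : Function.Injective (hT.segPath a b) := fun s t hst => by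
  have := hT.dist_segPath (a := a) (b := b) s t
  rw [hst, dist_self, eq_comm, mul_eq_zero, abs_eq_zero, sub_eq_zero] at this
  exact Subtype.ext (this.resolve_right (dist_ne_zero.mpr h))

theorem dist_eq_abs_sub (hy : y ∈ geoSeg a b) (hz : z ∈ geoSeg a b) :
    dist y z = |dist a y - dist a z| := by
  rw [← hT.range_segPath] at hy hz
  obtain ⟨s, rfl⟩ := hy
  obtain ⟨t, rfl⟩ := hz
  rw [hT.dist_segPath, hT.dist_segPath_left, hT.dist_segPath_left, ← sub_mul, abs_mul,
    abs_of_nonneg dist_nonneg]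

theorem geoSeg_eq_union_of_inter_subset (h : geoSeg a m ∩ geoSeg m c ⊆ {m}) :
    geoSeg a c = geoSeg a m ∪ geoSeg m c := by
  rcases eq_or_ne a m with rfl | ham
  · rw [geoSeg_self, singleton_union, insert_eq_of_mem (left_mem_geoSeg a c)]
  rcases eq_or_ne m c with rfl | hmc
  · rw [geoSeg_self, union_singleton, insert_eq_of_mem (right_mem_geoSeg a m)]
  set γ := (hT.segPath a m).trans (hT.segPath m c)
  have hγ : Function.Injective γ := Path.injective_trans (hT.injective_segPath ham)
    (hT.injective_segPath hmc) (by rwa [hT.range_segPath, hT.range_segPath])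
  have hinj : InjOn γ.extend (Icc 0 1) := fun s hs t ht hst => by
    rw [γ.extend_apply hs, γ.extend_apply ht] at hst
    exact congrArg Subtype.val (hγ hst)
  rw [← hT.loopless a c γ.extend γ.continuous_extend.continuousOn hinj γ.extend_zero
    γ.extend_one, γ.image_extend_Icc, Path.trans_range, hT.range_segPath, hT.range_segPath]

theorem geoSeg_subset_union (a b c : T) : geoSeg a c ⊆ geoSeg a b ∪ geoSeg b c := by
  -- the point `m` of `[[a, b]] ∩ [[b, c]]` closest to `a` is the only common point of
  -- `[[a, m]]` and `[[m, c]]`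
  obtain ⟨m, ⟨hmab, hmbc⟩, hmin⟩ :=
    ((hT.isCompact_geoSeg a b).inter_right (isClosed_geoSeg b c)).exists_isMinOn
      ⟨b, right_mem_geoSeg a b, left_mem_geoSeg b c⟩
      (continuous_const.dist continuous_id).continuousOn
  have hsplit : geoSeg a m ∩ geoSeg m c ⊆ {m} := by
    rintro z ⟨hzam, hzmc⟩
    have hle : dist a m ≤ dist a z :=
      hmin ⟨geoSeg_left_subset hmab hzam, geoSeg_right_subset hmbc hzmc⟩
    rw [mem_geoSeg] at hzam
    exact dist_le_zero.mp (by linarith)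
  rw [hT.geoSeg_eq_union_of_inter_subset hsplit]
  exact union_subset_union (geoSeg_left_subset hmab) (geoSeg_right_subset hmbc)

theorem mem_geoSeg_of_notMem (hy : y ∈ geoSeg a z) (hyz : y ∉ geoSeg c z) : y ∈ geoSeg a c :=
  (hT.geoSeg_subset_union a c z hy).resolve_right hyz

theorem connectedComponentIn_compl_singleton (hay : a ≠ y) :
    connectedComponentIn {y}ᶜ a = {z | y ∉ geoSeg a z} := by
  set U := {z | y ∉ geoSeg a z}
  have haU : a ∈ U := by simpa [U, geoSeg_self] using hay.symm
  have hUy : U ⊆ {y}ᶜ := fun z hz hzy =>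
    hz (by rw [mem_singleton_iff.mp hzy]; exact right_mem_geoSeg a y)
  refine Subset.antisymm ?_ ?_
  · set V := {z | z ≠ y ∧ y ∈ geoSeg a z}
    have hV : IsOpen V := by
      refine Metric.isOpen_iff.mpr fun z ⟨hzy, hyz⟩ =>
        ⟨dist z y, dist_pos.mpr hzy, fun w hw => ?_⟩
      rw [Metric.mem_ball] at hw
      refine ⟨fun hwy => by simp [hwy, dist_comm] at hw, hT.mem_geoSeg_of_notMem hyz fun h => ?_⟩
      rw [mem_geoSeg] at h
      linarith [dist_comm y z, dist_nonneg (x := w) (y := y)]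
    refine isPreconnected_connectedComponentIn.subset_left_of_subset_union
      (isOpen_setOf_notMem_geoSeg a y) hV (disjoint_left.mpr fun z hz hz' => hz hz'.2)
      (fun z hz => ?_) ⟨a, mem_connectedComponentIn hay, haU⟩
    by_cases hyz : y ∈ geoSeg a z
    · exact Or.inr ⟨connectedComponentIn_subset _ _ hz, hyz⟩
    · exact Or.inl hyz
  · have hU : IsPathConnected U := ⟨a, haU, fun {z} hz => ⟨hT.segPath a z, fun t hyt =>
      hz (geoSeg_left_subset (hT.range_segPath a z ▸ mem_range_self t) hyt)⟩⟩
    exact hU.isConnected.isPreconnected.subset_connectedComponentIn haU hUy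

theorem connectedComponentIn_compl_singleton_eq_iff (hay : a ≠ y) (hby : b ≠ y) :
    connectedComponentIn {y}ᶜ a = connectedComponentIn {y}ᶜ b ↔ y ∉ geoSeg a b := by
  refine ⟨fun h => ?_, fun h => connectedComponentIn_eq ?_⟩
  · have hb : b ∈ connectedComponentIn {y}ᶜ a := h ▸ mem_connectedComponentIn hby
    rwa [hT.connectedComponentIn_compl_singleton hay] at hb
  · rwa [hT.connectedComponentIn_compl_singleton hay]

end IsRTree

namespace PlaneRTree

variable {T : Type*} [MetricSpace T] (P : PlaneRTree T) {x y z : T}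

theorem u_eq_u_iff (hx : x ≠ z) (hy : y ≠ z) : P.u z x = P.u z y ↔ z ∉ geoSeg x y :=
  (P.u_eq_iff z x y hx hy).trans (P.tree.connectedComponentIn_compl_singleton_eq_iff hx hy)

theorem cca_eq_of_mem (hx : z ∈ geoSeg P.root x) (hy : z ∈ geoSeg P.root y)
    (hxy : z ∈ geoSeg x y) : P.cca x y = z := by
  obtain ⟨hmx, hmy⟩ := P.cca_mem x y
  have hle := P.cca_max x y z ⟨hx, hy⟩
  have hzm := P.tree.dist_eq_abs_sub hx hmx
  rw [abs_of_nonpos (sub_nonpos.mpr hle)] at hzm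
  rw [mem_geoSeg] at hx hy hxy hmx hmy
  have := dist_triangle x (P.cca x y) y
  exact (dist_le_zero.mp (by linarith [dist_comm z x, dist_comm (P.cca x y) x])).symm

theorem cca_mem_geoSeg (x y : T) : P.cca x y ∈ geoSeg x y := by
  obtain ⟨hmx, hmy⟩ := P.cca_mem x y
  have hsplit : geoSeg x (P.cca x y) ∩ geoSeg (P.cca x y) y ⊆ {P.cca x y} := by
    rintro z ⟨hzx, hzy⟩
    rw [geoSeg_comm] at hzx
    have hle := P.cca_max x y z ⟨geoSeg_right_subset hmx hzx, geoSeg_right_subset hmy hzy⟩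
    rw [mem_geoSeg] at hzx hmx
    exact dist_le_zero.mp (by linarith [dist_triangle P.root z x, dist_comm z (P.cca x y)])
  rw [P.tree.geoSeg_eq_union_of_inter_subset hsplit]
  exact Or.inl (right_mem_geoSeg _ _)

theorem cca_comm (x y : T) : P.cca y x = P.cca x y :=
  P.cca_eq_of_mem (P.cca_mem x y).2 (P.cca_mem x y).1 (geoSeg_comm x y ▸ P.cca_mem_geoSeg x y)

theorem cca_eq_left_iff : P.cca x y = x ↔ x ∈ geoSeg P.root y :=
  ⟨fun h => h ▸ (P.cca_mem x y).2,
    fun h => P.cca_eq_of_mem (right_mem_geoSeg _ _) h (left_mem_geoSeg x y)⟩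

theorem cca_eq_right_iff : P.cca x y = y ↔ y ∈ geoSeg P.root x := by
  rw [cca_comm, cca_eq_left_iff]

theorem cca_eq_of_notMem_geoSeg (h : P.cca x y ∉ geoSeg z y) : P.cca x z = P.cca x y :=
  P.cca_eq_of_mem (P.cca_mem x y).1 (P.tree.mem_geoSeg_of_notMem (P.cca_mem x y).2 h)
    (P.tree.mem_geoSeg_of_notMem (P.cca_mem_geoSeg x y) h)

/-- By balancedness, `T \ {y}` has a component besides those of `ρ` and `x`. -/
theorem exists_cca_eq_of_u_ne_half (hy : y ∈ geoSeg P.root x) (hyx : y ≠ x)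
    (hyρ : y ≠ P.root) (hu : P.u y x ≠ 1 / 2) : ∃ z ≠ y, P.cca x z = y := by
  have hcc := fun {a b : T} => P.tree.connectedComponentIn_compl_singleton_eq_iff (a := a)
    (b := b) (y := y)
  by_contra! h
  have hcomps : comps y = {connectedComponentIn {y}ᶜ P.root, connectedComponentIn {y}ᶜ x} := by
    refine Subset.antisymm ?_ ?_
    · rintro _ ⟨z, hzy, rfl⟩
      by_contra hz
      simp only [mem_insert_iff, mem_singleton_iff, not_or] at hz
      obtain ⟨hzρ, hzx⟩ := hz
      rw [hcc hzy hyρ.symm, not_not, geoSeg_comm] at hzρ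
      rw [hcc hzy hyx.symm, not_not, geoSeg_comm] at hzx
      exact h z hzy (P.cca_eq_of_mem hy hzρ hzx)
    · rintro _ (rfl | rfl)
      exacts [⟨_, hyρ.symm, rfl⟩, ⟨_, hyx.symm, rfl⟩]
  have hu0 : P.u y x ≠ 0 := by
    rw [← P.u_root y, Ne, P.u_eq_u_iff hyx.symm hyρ.symm, geoSeg_comm, not_not]
    exact hy
  rcases P.balanced y x (hcomps ▸ ncard_pair (by rwa [Ne, hcc hyρ.symm hyx.symm, not_not]))
    with h0 | h0
  exacts [hu0 h0, hu h0]

theorem countable_setOf_u_ne_half (x : T) :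
    {y ∈ geoSeg P.root x | P.u y x ≠ 1 / 2}.Countable := by
  have := P.sep
  obtain ⟨Q, hQ, hQdense⟩ := TopologicalSpace.exists_countable_dense T
  refine (((hQ.image (P.cca x)).insert x).insert P.root).mono fun y ⟨hy, hu⟩ => ?_
  by_cases hyρ : y = P.root
  · exact Or.inl hyρ
  by_cases hyx : y = x
  · exact Or.inr (Or.inl hyx)
  obtain ⟨z, hzy, hz⟩ := P.exists_cca_eq_of_u_ne_half hy hyx hyρ hu
  -- the component of `z` in `T \ {y}` is open, so it contains a point of `Q`
  obtain ⟨q, hqQ, hq⟩ := hQdense.exists_mem_open (isOpen_setOf_notMem_geoSeg z y)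
    ⟨z, by simpa [geoSeg_self] using hzy.symm⟩
  have hq' : P.cca x z ∉ geoSeg q z := by rwa [hz, geoSeg_comm]
  exact Or.inr (Or.inr ⟨q, hqQ, (P.cca_eq_of_notMem_geoSeg hq').trans hz⟩)

theorem ang_fst_self (α : T × ℝ) : P.ang α.1 α = α.2 := if_pos rfl

theorem ang_of_ne {β : T × ℝ} (h : x ≠ β.1) : P.ang x β = P.u x β.1 := if_neg h

/-- The relations `↷` and `→` between `α` and `β` depend on `β` only through
`P.branchAngle α.1 β` and `P.cca α.1 β.1`. -/
noncomputable def branchAngle (x : T) (β : T × ℝ) : ℝ := P.ang (P.cca x β.1) β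

variable {α β : T × ℝ}

theorem leftOf_iff_branchAngle_lt :
    P.leftOf β α ↔ P.branchAngle α.1 β < P.ang (P.cca α.1 β.1) α := by
  rw [leftOf, cca_comm]
  rfl

theorem leftOf_iff_lt_branchAngle :
    P.leftOf α β ↔ P.ang (P.cca α.1 β.1) α < P.branchAngle α.1 β := Iff.rfl

theorem frontOf_iff_cca_eq_and_branchAngle_eq :
    P.frontOf α β ↔ P.cca α.1 β.1 = α.1 ∧ P.branchAngle α.1 β = α.2 := by
  rw [frontOf, ← cca_eq_left_iff, branchAngle]
  exact and_congr_right fun h => by rw [h]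

theorem branchAngle_of_mem (hy : β.1 ∈ geoSeg P.root x) : P.branchAngle x β = β.2 := by
  rw [branchAngle, P.cca_eq_right_iff.mpr hy]
  exact if_pos rfl

theorem branchAngle_eq_of_frontOf (h : P.frontOf α β) :
    P.branchAngle α.1 β = P.ang (P.cca α.1 β.1) α := by
  obtain ⟨hm, ha⟩ := P.frontOf_iff_cca_eq_and_branchAngle_eq.mp h
  rw [ha, hm, ang_fst_self]

theorem not_leftOf_of_frontOf (h : P.frontOf α β) : ¬ P.leftOf β α := by
  rw [leftOf_iff_branchAngle_lt, P.branchAngle_eq_of_frontOf h]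
  exact lt_irrefl _

theorem not_leftOf_swap_of_frontOf (h : P.frontOf α β) : ¬ P.leftOf α β := by
  rw [leftOf_iff_lt_branchAngle, P.branchAngle_eq_of_frontOf h]
  exact lt_irrefl _

theorem leftOf_asymm (h : P.leftOf β α) : ¬ P.leftOf α β := by
  rw [leftOf_iff_branchAngle_lt] at h
  rw [leftOf_iff_lt_branchAngle]
  exact h.not_gt

theorem leftOf_or_frontOf_or_leftOf (α β : T × ℝ) :
    P.leftOf β α ∨ P.frontOf α β ∨ P.leftOf α β ∨
      (β.1 ∈ geoSeg P.root α.1 ∧ β.2 = P.ang β.1 α) := by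
  rw [leftOf_iff_branchAngle_lt, leftOf_iff_lt_branchAngle, frontOf_iff_cca_eq_and_branchAngle_eq]
  rcases lt_trichotomy (P.branchAngle α.1 β) (P.ang (P.cca α.1 β.1) α) with h | h | h
  · exact Or.inl h
  · by_cases hmx : P.cca α.1 β.1 = α.1
    · exact Or.inr (Or.inl ⟨hmx, by rw [h, hmx, ang_fst_self]⟩)
    by_cases hmy : P.cca α.1 β.1 = β.1
    · have hy := P.cca_eq_right_iff.mp hmy
      refine Or.inr (Or.inr (Or.inr ⟨hy, ?_⟩))
      rwa [P.branchAngle_of_mem hy, hmy] at h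
    -- otherwise `β.1` and `α.1` would lie in the same component at their common ancestor
    rw [branchAngle, P.ang_of_ne hmy, P.ang_of_ne hmx, P.u_eq_u_iff (Ne.symm hmy) (Ne.symm hmx),
      geoSeg_comm] at h
    exact absurd (P.cca_mem_geoSeg _ _) h
  · exact Or.inr (Or.inr (Or.inl h))

/-- Off `[[ρ, x]]`, the common ancestor with `x` and the angle there are locally constant. -/
theorem isOpen_setOf_notMem_geoSeg_and (x : T) (R : T → ℝ → Prop) :
    IsOpen {β : T × ℝ | β.1 ∉ geoSeg P.root x ∧ R (P.cca x β.1) (P.branchAngle x β)} := by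
  refine isOpen_iff_mem_nhds.mpr ?_
  rintro ⟨y, w⟩ ⟨hy, hR⟩
  have hmy : P.cca x y ≠ y := fun h => hy (P.cca_eq_right_iff.mp h)
  refine mem_of_superset (prod_mem_nhds ((isOpen_setOf_notMem_geoSeg y _).mem_nhds
    (by simpa [geoSeg_self] using hmy)) univ_mem) ?_
  rintro ⟨z, w'⟩ ⟨hz, -⟩
  have hz : P.cca x y ∉ geoSeg z y := by rw [geoSeg_comm]; exact hz
  have hcca : P.cca x z = P.cca x y := P.cca_eq_of_notMem_geoSeg hz
  have hmz : P.cca x y ≠ z := fun h => hz (h ▸ left_mem_geoSeg _ _)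
  refine ⟨fun hz' => hmz (hcca ▸ P.cca_eq_right_iff.mpr hz'), ?_⟩
  have hu : P.u (P.cca x y) z = P.u (P.cca x y) y := (P.u_eq_u_iff hmz.symm hmy.symm).mpr hz
  simpa [branchAngle, hcca, P.ang_of_ne (β := (z, w')) hmz, P.ang_of_ne (β := (y, w)) hmy, hu]
    using hR

theorem countable_setOf_ang_ne_half (α : T × ℝ) :
    {y ∈ geoSeg P.root α.1 | P.ang y α ≠ 1 / 2}.Countable := by
  refine ((P.countable_setOf_u_ne_half α.1).insert α.1).mono fun y ⟨hy, h⟩ => ?_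
  by_cases hyx : y = α.1
  · exact Or.inl hyx
  · exact Or.inr ⟨hy, by rwa [P.ang_of_ne hyx] at h⟩

section Measure

variable [MeasurableSpace T] (α : T × ℝ)

/-- By balancedness, the angles `u(y, α.1)` along `[[ρ, α.1]]` take countably many values. -/
theorem pL_setOf_mem_geoSeg_and_eq_ang (p : Measure T) :
    pL p {β | β.1 ∈ geoSeg P.root α.1 ∧ β.2 = P.ang β.1 α} = 0 := by
  refine measure_mono_null ?_
    (pL_univ_prod_eq_zero p (((P.countable_setOf_ang_ne_half α).image (P.ang · α)).insert (1 / 2)))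
  rintro β ⟨hy, hw⟩
  refine ⟨mem_univ _, ?_⟩
  by_cases h : P.ang β.1 α = 1 / 2
  · exact Or.inl (hw.trans h)
  · exact Or.inr ⟨β.1, ⟨hy, h⟩, hw.symm⟩

variable [BorelSpace T]

theorem measurableSet_setOf_cca_branchAngle (x : T) (R : T → ℝ → Prop) {E : Set T}
    (hE : E.Countable) {t : Set ℝ} (ht : MeasurableSet t) (hR : ∀ y ∈ E, MeasurableSet {w | R y w})
    (hRt : ∀ y ∈ geoSeg P.root x \ E, {w | R y w} = t) :
    MeasurableSet {β : T × ℝ | R (P.cca x β.1) (P.branchAngle x β)} := by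
  have hsplit : {β : T × ℝ | R (P.cca x β.1) (P.branchAngle x β)} =
      {β | β.1 ∉ geoSeg P.root x ∧ R (P.cca x β.1) (P.branchAngle x β)} ∪
        {β | β.1 ∈ geoSeg P.root x ∧ β.2 ∈ {w | R β.1 w}} := by
    ext β
    by_cases hy : β.1 ∈ geoSeg P.root x
    · simp [hy, P.branchAngle_of_mem hy, P.cca_eq_right_iff.mpr hy]
    · simp [hy]
  rw [hsplit]
  exact (P.isOpen_setOf_notMem_geoSeg_and x R).measurableSet.union
    (measurableSet_setOf_mem_of_countable (isClosed_geoSeg _ _).measurableSet hE ht hR hRt)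

theorem measurableSet_setOf_leftOf : MeasurableSet {β | P.leftOf β α} := by
  simp_rw [leftOf_iff_branchAngle_lt]
  refine P.measurableSet_setOf_cca_branchAngle α.1 (fun m a => a < P.ang m α)
    (P.countable_setOf_ang_ne_half α) (measurableSet_Iio (a := 1 / 2))
    (fun _ _ => measurableSet_Iio) ?_
  rintro y ⟨hy, hyE⟩
  have : P.ang y α = 1 / 2 := by simpa [hy] using hyE
  simp [this, Iio]

theorem measurableSet_setOf_leftOf_swap : MeasurableSet {β | P.leftOf α β} := by
  simp_rw [leftOf_iff_lt_branchAngle]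
  refine P.measurableSet_setOf_cca_branchAngle α.1 (fun m a => P.ang m α < a)
    (P.countable_setOf_ang_ne_half α) (measurableSet_Ioi (a := 1 / 2))
    (fun _ _ => measurableSet_Ioi) ?_
  rintro y ⟨hy, hyE⟩
  have : P.ang y α = 1 / 2 := by simpa [hy] using hyE
  simp [this, Ioi]

theorem measurableSet_setOf_frontOf : MeasurableSet {β | P.frontOf α β} := by
  simp_rw [frontOf_iff_cca_eq_and_branchAngle_eq]
  refine P.measurableSet_setOf_cca_branchAngle α.1 (fun m a => m = α.1 ∧ a = α.2)
    (countable_singleton α.1) MeasurableSet.empty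
    (fun _ _ => (MeasurableSet.const _).inter (measurableSet_singleton _)) ?_
  rintro y ⟨-, hy⟩
  simp [mem_singleton_iff.not.mp hy]

end Measure

end PlaneRTree

theorem pleft_add_pfront_add_pright_eq_one_general {T : Type*} [MetricSpace T]
    [MeasurableSpace T] [BorelSpace T] (P : PlaneRTree T)
    (p : Measure T) [IsProbabilityMeasure p]
    (α : T × ℝ) :
    P.pleft p α + P.pfront p α + P.pright p α = 1 := by
  refine toReal_measure_add_add_eq_one (P.measurableSet_setOf_leftOf α) (P.measurableSet_setOf_frontOf α)
    (P.measurableSet_setOf_leftOf_swap α)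
    (disjoint_left.mpr fun _ hL hF => P.not_leftOf_of_frontOf hF hL)
    (disjoint_left.mpr fun _ hL hR => P.leftOf_asymm hL hR)
    (disjoint_left.mpr fun _ hF hR => P.not_leftOf_swap_of_frontOf hF hR)
    (measure_mono_null (fun β hβ => ?_) (P.pL_setOf_mem_geoSeg_and_eq_ang α p))
  simp only [mem_compl_iff, mem_union, not_or] at hβ
  obtain ⟨⟨hL, hF⟩, hR⟩ := hβ
  exact ((P.leftOf_or_frontOf_or_leftOf α β).resolve_left hL |>.resolve_left hF).resolve_left hR

/-- For every `α ∈ T × [0,1]`, `p_↶(α) + p_→(α) + p_↷(α) = 1`. -/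
theorem pleft_add_pfront_add_pright_eq_one {T : Type*} [MetricSpace T]
    [MeasurableSpace T] [BorelSpace T] (P : PlaneRTree T)
    (p : Measure T) [IsProbabilityMeasure p]
    (α : T × ℝ) (hα : α.2 ∈ Icc (0:ℝ) 1) :
    P.pleft p α + P.pfront p α + P.pright p α = 1 :=
  pleft_add_pfront_add_pright_eq_one_general P p α
end
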